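/- arXiv:1212.1149 — 12 statements merged into one kernel-verified Lean document; each statement's English description precedes it below -/
import Mathlib

section
/- Let A = [a_ij] be the n×n zero-one adjacency matrix (with zero diagonal) of a loopless digraph G on vertices v_1,…,v_n, with out-degrees α_i^+ = Σ_j a_ij and in-degrees α_j^- = Σ_i a_ij. If A is the unique zero-one matrix with zero diagonal having row sums (α_1^+,…,α_n^+) and column sums (α_1^-,…,α_n^-) (i.e., G is the unique vertex-labeled realization of its degree sequence), then G contains no 2-switch and no induced directed 3-cycle. -/
/-!
Both configurations are alternating cycles: a list `R` of arcs and a list `S` of non-arcs with the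
same tails and the same heads. Deleting the arcs of `R` and adding those of `S` changes no in- or
out-degree, so it yields a second zero-one, loopless realization of the degree sequence, distinct
from `A` as soon as `R` is nonempty. For a 2-switch `R = [wx, yz]`, `S = [wz, yx]`; for an induced
3-cycle `R = [xy, yz, zx]` and `S` is the reversed cycle.
-/

/-- `A` is a zero-one matrix. -/
def ZeroOne (n : ℕ) (A : Fin n → Fin n → ℕ) : Prop :=
  ∀ i j, A i j = 0 ∨ A i j = 1

/-- `A` has zero diagonal (no loops). -/
def ZeroDiag (n : ℕ) (A : Fin n → Fin n → ℕ) : Prop :=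
  ∀ i, A i i = 0

/-- Out-degree of vertex `i` (row sum). -/
def outdeg (n : ℕ) (A : Fin n → Fin n → ℕ) (i : Fin n) : ℕ := ∑ j, A i j

/-- In-degree of vertex `j` (column sum). -/
def indeg (n : ℕ) (A : Fin n → Fin n → ℕ) (j : Fin n) : ℕ := ∑ i, A i j

/-- `G` contains a 2-switch: four distinct vertices `w,x,y,z` with arcs `(w,x)`, `(y,z)`
and non-arcs `(w,z)`, `(y,x)`. -/
def HasTwoSwitch (n : ℕ) (A : Fin n → Fin n → ℕ) : Prop :=
  ∃ w x y z : Fin n, w ≠ x ∧ w ≠ y ∧ w ≠ z ∧ x ≠ y ∧ x ≠ z ∧ y ≠ z ∧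
    A w x = 1 ∧ A y z = 1 ∧ A w z = 0 ∧ A y x = 0

/-- `G` contains an induced directed 3-cycle on three distinct vertices `x,y,z`. -/
def HasInducedC3 (n : ℕ) (A : Fin n → Fin n → ℕ) : Prop :=
  ∃ x y z : Fin n, x ≠ y ∧ x ≠ z ∧ y ≠ z ∧
    A x y = 1 ∧ A y z = 1 ∧ A z x = 1 ∧
    A y x = 0 ∧ A z y = 0 ∧ A x z = 0

/-- The degree sequence `(p i, m i)` is in positive lexicographic order. -/
def PosLex (n : ℕ) (p m : Fin n → ℕ) : Prop :=
  ∀ i j : Fin n, (i : ℕ) + 1 = (j : ℕ) →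
    p j ≤ p i ∧ (p i = p j → m j ≤ m i)

/-- Condition (3): for distinct `i, j, k` with `i < j`, `a_{jk} = 1` implies `a_{ik} = 1`. -/
def Nested (n : ℕ) (A : Fin n → Fin n → ℕ) : Prop :=
  ∀ i j k : Fin n, i ≠ j → i ≠ k → j ≠ k → i < j → A j k = 1 → A i k = 1

/-- `A` is the unique zero-one matrix with zero diagonal having its row and column sums. -/
def UniqueRealization (n : ℕ) (A : Fin n → Fin n → ℕ) : Prop :=
  ∀ B : Fin n → Fin n → ℕ, ZeroOne n B → ZeroDiag n B →
    (∀ i, outdeg n B i = outdeg n A i) → (∀ j, indeg n B j = indeg n A j) → B = A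

theorem List.sum_count_prodMk_eq_count_map_fst {α β : Type*} [DecidableEq α] [DecidableEq β]
    [Fintype β] (l : List (α × β)) (a : α) :
    ∑ b, l.count (a, b) = (l.map Prod.fst).count a := by
  induction l with
  | nil => simp
  | cons p l ih =>
    obtain ⟨a', b'⟩ := p
    by_cases h : a' = a <;> simp [List.count_cons, Finset.sum_add_distrib, ih, h]

theorem List.sum_count_prodMk_eq_count_map_snd {α β : Type*} [DecidableEq α] [DecidableEq β]
    [Fintype α] (l : List (α × β)) (b : β) :
    ∑ a, l.count (a, b) = (l.map Prod.snd).count b := by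
  induction l with
  | nil => simp
  | cons p l ih =>
    obtain ⟨a', b'⟩ := p
    by_cases h : b' = b <;> simp [List.count_cons, Finset.sum_add_distrib, ih, h]

section Switch

variable {n : ℕ} {A : Fin n → Fin n → ℕ} {R S : List (Fin n × Fin n)}

structure IsSwitch (A : Fin n → Fin n → ℕ) (R S : List (Fin n × Fin n)) : Prop where
  nodup_arcs : R.Nodup
  nodup_nonarcs : S.Nodup
  arcs : ∀ p ∈ R, A p.1 p.2 = 1
  nonarcs : ∀ p ∈ S, A p.1 p.2 = 0
  loopless : ∀ p ∈ S, p.1 ≠ p.2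
  tails : (R.map Prod.fst).Perm (S.map Prod.fst)
  heads : (R.map Prod.snd).Perm (S.map Prod.snd)

def switch (A : Fin n → Fin n → ℕ) (R S : List (Fin n × Fin n)) (i j : Fin n) : ℕ :=
  if (i, j) ∈ R then 0 else if (i, j) ∈ S then 1 else A i j

theorem zeroOne_switch (h01 : ZeroOne n A) : ZeroOne n (switch A R S) := by
  intro i j
  unfold switch
  split_ifs <;> simp [h01 i j]

theorem zeroDiag_switch (hdiag : ZeroDiag n A) (hS : ∀ p ∈ S, p.1 ≠ p.2) :
    ZeroDiag n (switch A R S) := by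
  intro i
  have : (i, i) ∉ S := fun h => hS _ h rfl
  simp [switch, this, hdiag i]

theorem IsSwitch.switch_add_count (h : IsSwitch A R S) (i j : Fin n) :
    switch A R S i j + R.count (i, j) = A i j + S.count (i, j) := by
  rw [h.nodup_arcs.count, h.nodup_nonarcs.count]
  by_cases hR : (i, j) ∈ R
  · have hS : (i, j) ∉ S := fun hS => by simpa [h.arcs _ hR] using h.nonarcs _ hS
    simp [switch, hR, hS, h.arcs _ hR]
  · by_cases hS : (i, j) ∈ S
    · simp [switch, hR, hS, h.nonarcs _ hS]
    · simp [switch, hR, hS]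

theorem IsSwitch.outdeg_switch (h : IsSwitch A R S) (i : Fin n) :
    outdeg n (switch A R S) i = outdeg n A i := by
  have hsum := Finset.sum_congr rfl fun j (_ : j ∈ Finset.univ) => h.switch_add_count i j
  simp only [Finset.sum_add_distrib, List.sum_count_prodMk_eq_count_map_fst,
    h.tails.count_eq] at hsum
  exact Nat.add_right_cancel hsum

theorem IsSwitch.indeg_switch (h : IsSwitch A R S) (j : Fin n) :
    indeg n (switch A R S) j = indeg n A j := by
  have hsum := Finset.sum_congr rfl fun i (_ : i ∈ Finset.univ) => h.switch_add_count i j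
  simp only [Finset.sum_add_distrib, List.sum_count_prodMk_eq_count_map_snd,
    h.heads.count_eq] at hsum
  exact Nat.add_right_cancel hsum

theorem UniqueRealization.eq_nil_of_isSwitch (huniq : UniqueRealization n A)
    (h01 : ZeroOne n A) (hdiag : ZeroDiag n A) (h : IsSwitch A R S) : R = [] := by
  have hA : switch A R S = A :=
    huniq _ (zeroOne_switch h01) (zeroDiag_switch hdiag h.loopless) h.outdeg_switch
      h.indeg_switch
  refine List.eq_nil_iff_forall_not_mem.mpr fun p hp => ?_
  have : switch A R S p.1 p.2 = 0 := by simp [switch, hp]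
  simp [hA, h.arcs p hp] at this

end Switch

/-- If `A` is the unique vertex-labeled realization of its degree sequence,
then `G` contains no 2-switch and no induced directed 3-cycle. -/
theorem stmt0 (n : ℕ) (A : Fin n → Fin n → ℕ)
    (h01 : ZeroOne n A) (hdiag : ZeroDiag n A)
    (huniq : UniqueRealization n A) :
    ¬ HasTwoSwitch n A ∧ ¬ HasInducedC3 n A := by
  constructor
  · rintro ⟨w, x, y, z, hwx, hwy, hwz, hxy, hxz, hyz, awx, ayz, awz, ayx⟩
    have h : IsSwitch A [(w, x), (y, z)] [(w, z), (y, x)] :=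
      { nodup_arcs := by simp [hwy]
        nodup_nonarcs := by simp [hwy]
        arcs := by simp [awx, ayz]
        nonarcs := by simp [awz, ayx]
        loopless := by simp [hwz, hxy.symm]
        tails := .refl _
        heads := .swap z x [] }
    exact List.cons_ne_nil _ _ (huniq.eq_nil_of_isSwitch h01 hdiag h)
  · rintro ⟨x, y, z, hxy, hxz, hyz, axy, ayz, azx, ayx, azy, axz⟩
    have h : IsSwitch A [(x, y), (y, z), (z, x)] [(y, x), (z, y), (x, z)] :=
      { nodup_arcs := by simp [hxy, hxz, hyz]
        nodup_nonarcs := by simp [hxy, hxz, hyz]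
        arcs := by simp [axy, ayz, azx]
        nonarcs := by simp [ayx, azy, axz]
        loopless := by simp [hxy.symm, hyz.symm, hxz]
        tails := by simpa using (List.rotate_perm [y, z, x] 2)
        heads := by simpa using List.rotate_perm [x, y, z] 1 }
    exact List.cons_ne_nil _ _ (huniq.eq_nil_of_isSwitch h01 hdiag h)
end

section
/- Let A = [a_ij] be the n×n zero-one adjacency matrix (with zero diagonal) of a loopless digraph G on vertices v_1,…,v_n, with out-degrees α_i^+ = Σ_j a_ij and in-degrees α_j^- = Σ_i a_ij, and suppose the degree sequence α = ((α_1^+,α_1^-),…,(α_n^+,α_n^-)) is in positive lexicographic order. If G contains no 2-switch and no induced directed 3-cycle, then for every triple of distinct indices i, j, k with i < j, a_jk = 1 implies a_ik = 1. -/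
/-!
Suppose `i < j`, `a_jk = 1` but `a_ik = 0`. Absence of 2-switches forces every out-neighbour of
`v_i` other than `v_j` into the out-neighbourhood of `v_j`, and `v_k` is an extra one, so the
positive lexicographic order can only hold with `a_ij = 1`, `a_ji = 0` and equal out-degrees.
Then the in-degrees must satisfy `α_j^- ≤ α_i^-`; but now every in-neighbour of `v_i` is an
in-neighbour of `v_j` (for `v_k` this is the absence of the induced 3-cycle `v_i v_j v_k`,
otherwise two 2-switch arguments) and `v_i` is an extra one, a contradiction.
-/

open Finset

theorem PosLex.antitone {n : ℕ} {p m : Fin n → ℕ} (h : PosLex n p m) :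
    Antitone fun i => toLex (p i, m i) := by
  cases n with
  | zero => exact fun i => i.elim0
  | succ n =>
    refine Fin.antitone_iff_succ_le.2 fun i => ?_
    obtain ⟨hp, hm⟩ := h i.castSucc i.succ rfl
    exact Prod.Lex.toLex_le_toLex'.2 ⟨hp, fun he => hm he.symm⟩

theorem sum_eq_add_add_sum_compl_pair {ι M : Type*} [Fintype ι] [DecidableEq ι]
    [AddCommMonoid M] (f : ι → M) {i j : ι} (hij : i ≠ j) :
    ∑ x, f x = f i + f j + ∑ x ∈ {i, j}ᶜ, f x := by
  rw [← sum_add_sum_compl {i, j}, sum_pair hij]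

section Digraph

variable {n : ℕ} {A : Fin n → Fin n → ℕ}

theorem ZeroOne.eq_zero_of_ne_one (h01 : ZeroOne n A) {i j : Fin n} (h : A i j ≠ 1) :
    A i j = 0 :=
  (h01 i j).resolve_right h

theorem ZeroOne.le_one (h01 : ZeroOne n A) (i j : Fin n) : A i j ≤ 1 := by
  rcases h01 i j with h | h <;> omega

theorem ZeroOne.le_of_eq_one_imp (h01 : ZeroOne n A) {a b c d : Fin n}
    (h : A a b = 1 → A c d = 1) : A a b ≤ A c d := by
  rcases h01 a b with hab | hab
  · omega
  · rw [hab, h hab]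

theorem eq_one_of_not_hasTwoSwitch (h01 : ZeroOne n A) (hsw : ¬ HasTwoSwitch n A)
    {w x y z : Fin n} (hwx : w ≠ x) (hwy : w ≠ y) (hwz : w ≠ z) (hxy : x ≠ y) (hxz : x ≠ z)
    (hyz : y ≠ z) (hwx1 : A w x = 1) (hyz1 : A y z = 1) (hwz0 : A w z = 0) : A y x = 1 := by
  by_contra hyx
  exact hsw ⟨w, x, y, z, hwx, hwy, hwz, hxy, hxz, hyz, hwx1, hyz1, hwz0,
    h01.eq_zero_of_ne_one hyx⟩

theorem eq_one_of_not_hasInducedC3 (h01 : ZeroOne n A) (hc3 : ¬ HasInducedC3 n A)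
    {x y z : Fin n} (hxy : x ≠ y) (hxz : x ≠ z) (hyz : y ≠ z) (hxy1 : A x y = 1)
    (hyz1 : A y z = 1) (hzx1 : A z x = 1) (hyx0 : A y x = 0) (hxz0 : A x z = 0) :
    A z y = 1 := by
  by_contra hzy
  exact hc3 ⟨x, y, z, hxy, hxz, hyz, hxy1, hyz1, hzx1, hyx0, h01.eq_zero_of_ne_one hzy, hxz0⟩

variable (h01 : ZeroOne n A) (hdiag : ZeroDiag n A) (hsw : ¬ HasTwoSwitch n A)
  {i j k : Fin n} (hij : i ≠ j) (hik : i ≠ k) (hjk : j ≠ k)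
  (hjk1 : A j k = 1) (hik0 : A i k = 0)
include h01 hdiag hsw hij hik hjk hjk1 hik0

theorem outdeg_add_lt_outdeg_add : outdeg n A i + A j i < outdeg n A j + A i j := by
  have hrow : ∑ x ∈ {i, j}ᶜ, A i x < ∑ x ∈ {i, j}ᶜ, A j x := by
    refine sum_lt_sum (fun x hx => h01.le_of_eq_one_imp fun hix => ?_)
      ⟨k, by simp [hik.symm, hjk.symm], by omega⟩
    simp only [mem_compl, mem_insert, mem_singleton, not_or] at hx
    have hxk : x ≠ k := by rintro rfl; omega
    exact eq_one_of_not_hasTwoSwitch h01 hsw (Ne.symm hx.1) hij hik hx.2 hxk hjk hix hjk1 hik0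
  rw [outdeg, outdeg, sum_eq_add_add_sum_compl_pair _ hij, sum_eq_add_add_sum_compl_pair _ hij,
    hdiag, hdiag]
  omega

theorem indeg_lt_indeg (hc3 : ¬ HasInducedC3 n A) (hij1 : A i j = 1) (hji0 : A j i = 0) :
    indeg n A i < indeg n A j := by
  have hcol : ∑ x ∈ {i, j}ᶜ, A x i ≤ ∑ x ∈ {i, j}ᶜ, A x j := by
    refine sum_le_sum fun x hx => h01.le_of_eq_one_imp fun hxi => ?_
    simp only [mem_compl, mem_insert, mem_singleton, not_or] at hx
    obtain rfl | hxk := eq_or_ne x k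
    · exact eq_one_of_not_hasInducedC3 h01 hc3 hij hik hjk hij1 hjk1 hxi hji0 hik0
    -- an arc `x → k` is forced by the 2-switch `(x,i),(j,k)`, and then `(i,j),(x,k)` gives `x → j`
    have hxk1 : A x k = 1 := by
      by_contra hxk0
      have := eq_one_of_not_hasTwoSwitch h01 hsw hx.1 hx.2 hxk hij hik hjk hxi hjk1
        (h01.eq_zero_of_ne_one hxk0)
      omega
    exact eq_one_of_not_hasTwoSwitch h01 hsw hij (Ne.symm hx.1) hik (Ne.symm hx.2) hjk hxk hij1
      hxk1 hik0
  rw [indeg, indeg, sum_eq_add_add_sum_compl_pair (fun x => A x i) hij,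
    sum_eq_add_add_sum_compl_pair (fun x => A x j) hij, hdiag, hdiag]
  omega

end Digraph

/-- if the degree sequence is in positive lexicographic order and `G` has
no 2-switch and no induced directed 3-cycle, then the nesting condition holds. -/
theorem stmt1 (n : ℕ) (A : Fin n → Fin n → ℕ)
    (h01 : ZeroOne n A) (hdiag : ZeroDiag n A)
    (hlex : PosLex n (outdeg n A) (indeg n A))
    (hsw : ¬ HasTwoSwitch n A) (hc3 : ¬ HasInducedC3 n A) :
    Nested n A := by
  intro i j k hij hik hjk hlt hjk1
  by_contra hik1
  have hik0 := h01.eq_zero_of_ne_one hik1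
  have hout := outdeg_add_lt_outdeg_add h01 hdiag hsw hij hik hjk hjk1 hik0
  obtain ⟨hout_le, hin_le⟩ := Prod.Lex.toLex_le_toLex'.1 (hlex.antitone hlt.le)
  have hij1 : A i j = 1 := by have := h01.le_one i j; omega
  have hji0 : A j i = 0 := by omega
  have hin_lt := indeg_lt_indeg h01 hdiag hsw hij hik hjk hjk1 hik0 hc3 hij1 hji0
  exact absurd (hin_le (by omega)) hin_lt.not_ge
end

section
/- Let A = [a_ij] be an n×n zero-one matrix with zero diagonal, with row sums α_i^+ = Σ_j a_ij and column sums α_j^- = Σ_i a_ij. If for every triple of distinct indices i, j, k with i < j, a_jk = 1 implies a_ik = 1, then the Fulkerson–Chen inequalities hold with equality: for every k with 1 ≤ k ≤ n, Σ_{i=1}^k min(α_i^-, k−1) + Σ_{i=k+1}^n min(α_i^-, k) = Σ_{i=1}^k α_i^+. -/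
/-!
Condition (3) says that the support of every column `j` is an initial segment of the
vertices other than `j`: if `a_ij = 1` then `a_i'j = 1` for every `i' < i` with `i' ≠ j`.
The first `k` vertices other than `j` also form such an initial segment, and two initial
segments of the same chain are comparable, so their intersection has size the minimum of
their sizes. Hence `Σ_{i ≤ k} a_ij = min(α_j^-, k - 1)` or `min(α_j^-, k)` according as
`j ≤ k` or not, and summing over the columns gives the identity.
-/

open Finset

def IsInitialSegmentOf {α : Type*} [LinearOrder α] (S T : Finset α) : Prop :=
  S ⊆ T ∧ ∀ ⦃x⦄, x ∈ S → ∀ ⦃y⦄, y ∈ T → y < x → y ∈ S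

namespace IsInitialSegmentOf

variable {α : Type*} [LinearOrder α] {S U T : Finset α}

theorem subset_or_subset (hS : IsInitialSegmentOf S T) (hU : IsInitialSegmentOf U T) :
    S ⊆ U ∨ U ⊆ S := by
  by_contra! h
  obtain ⟨⟨x, hxS, hxU⟩, ⟨y, hyU, hyS⟩⟩ := And.imp not_subset.mp not_subset.mp h
  rcases lt_trichotomy x y with hxy | rfl | hyx
  · exact hxU (hU.2 hyU (hS.1 hxS) hxy)
  · exact hxU hyU
  · exact hyS (hS.2 hxS (hU.1 hyU) hyx)

theorem card_inter (hS : IsInitialSegmentOf S T) (hU : IsInitialSegmentOf U T) :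
    #(S ∩ U) = min #S #U := by
  rcases hS.subset_or_subset hU with h | h
  · rw [inter_eq_left.mpr h, min_eq_left (card_le_card h)]
  · rw [inter_eq_right.mpr h, min_eq_right (card_le_card h)]

theorem filter (T : Finset α) {p : α → Prop} [DecidablePred p]
    (hp : ∀ ⦃x y⦄, y < x → p x → p y) : IsInitialSegmentOf (T.filter p) T :=
  ⟨filter_subset p T, fun _ hx _ hy hyx => mem_filter.mpr ⟨hy, hp hyx (mem_filter.mp hx).2⟩⟩

end IsInitialSegmentOf

section Digraph

variable {n : ℕ} {A : Fin n → Fin n → ℕ}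

theorem sum_eq_card_filter_eq_one (h01 : ZeroOne n A) (s : Finset (Fin n)) (j : Fin n) :
    ∑ i ∈ s, A i j = #{i ∈ s | A i j = 1} := by
  rw [card_filter]
  refine sum_congr rfl fun i _ => ?_
  rcases h01 i j with h | h <;> simp [h]

theorem isInitialSegmentOf_column (hdiag : ZeroDiag n A) (hnest : Nested n A) (j : Fin n) :
    IsInitialSegmentOf {i | A i j = 1} (univ.erase j) := by
  have hne : ∀ i, A i j = 1 → i ≠ j := by
    rintro i hi rfl
    simp [hdiag i] at hi
  refine ⟨fun i hi => mem_erase.mpr ⟨hne i (mem_filter.mp hi).2, mem_univ i⟩, ?_⟩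
  intro i hi i' hi' hlt
  simp only [mem_filter, mem_univ, true_and, mem_erase] at hi hi' ⊢
  exact hnest i' i j hlt.ne hi'.1 (hne i hi) hlt hi

theorem card_erase_filter_val_lt (j : Fin n) {k : ℕ} (hkn : k ≤ n) :
    #((univ.erase j).filter fun i : Fin n => (i : ℕ) < k) =
      if (j : ℕ) < k then k - 1 else k := by
  rw [filter_erase]
  split_ifs with hjk
  · rw [card_erase_of_mem (by simpa using hjk), Fin.card_filter_val_lt, min_eq_right hkn]
  · rw [erase_eq_of_notMem (by simpa using hjk), Fin.card_filter_val_lt, min_eq_right hkn]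

theorem sum_filter_val_lt_column (h01 : ZeroOne n A) (hdiag : ZeroDiag n A)
    (hnest : Nested n A) (j : Fin n) {k : ℕ} (hkn : k ≤ n) :
    ∑ i : Fin n with i.val < k, A i j =
      if (j : ℕ) < k then min (indeg n A j) (k - 1) else min (indeg n A j) k := by
  have hcolumn := isInitialSegmentOf_column hdiag hnest j
  have hfirst : IsInitialSegmentOf ((univ.erase j).filter fun i : Fin n => (i : ℕ) < k)
      (univ.erase j) :=
    .filter _ fun _ _ hyx hx => (Fin.lt_def.mp hyx).trans hx
  calc ∑ i : Fin n with i.val < k, A i j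
      = #(({i | A i j = 1} : Finset (Fin n)).filter fun i : Fin n => (i : ℕ) < k) := by
        rw [sum_eq_card_filter_eq_one h01, filter_comm]
    _ = #(({i | A i j = 1} : Finset (Fin n)) ∩
          (univ.erase j).filter fun i : Fin n => (i : ℕ) < k) := by
        rw [inter_filter, inter_eq_left.mpr hcolumn.1]
    _ = min (indeg n A j) (if (j : ℕ) < k then k - 1 else k) := by
        rw [hcolumn.card_inter hfirst, card_erase_filter_val_lt j hkn,
          ← sum_eq_card_filter_eq_one h01 univ j, indeg]
    _ = _ := apply_ite _ _ _ _

end Digraph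

/-- the nesting condition implies the Fulkerson–Chen inequalities hold
with equality. -/
theorem stmt2 (n : ℕ) (A : Fin n → Fin n → ℕ)
    (h01 : ZeroOne n A) (hdiag : ZeroDiag n A)
    (hnest : Nested n A) :
    ∀ k : ℕ, 1 ≤ k → k ≤ n →
      (∑ i : Fin n, if (i : ℕ) < k then min (indeg n A i) (k - 1) else min (indeg n A i) k)
        = ∑ i : Fin n, if (i : ℕ) < k then outdeg n A i else 0 := by
  intro k _ hkn
  calc (∑ j : Fin n, if (j : ℕ) < k then min (indeg n A j) (k - 1) else min (indeg n A j) k)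
      = ∑ j, ∑ i : Fin n with i.val < k, A i j :=
        sum_congr rfl fun j _ => (sum_filter_val_lt_column h01 hdiag hnest j hkn).symm
    _ = ∑ i : Fin n with i.val < k, outdeg n A i := sum_comm
    _ = ∑ i : Fin n, if (i : ℕ) < k then outdeg n A i else 0 := sum_filter _ _
end

section
/- Let A = [a_ij] be the n×n zero-one adjacency matrix (with zero diagonal) of a loopless digraph G on vertices v_1,…,v_n, with out-degrees α_i^+ = Σ_j a_ij and in-degrees α_j^- = Σ_i a_ij, and suppose the degree sequence α = ((α_1^+,α_1^-),…,(α_n^+,α_n^-)) is in positive lexicographic order. If for every k with 1 ≤ k ≤ n one has Σ_{i=1}^k min(α_i^-, k−1) + Σ_{i=k+1}^n min(α_i^-, k) = Σ_{i=1}^k α_i^+, then A is the unique zero-one matrix with zero diagonal having row sums (α_1^+,…,α_n^+) and column sums (α_1^-,…,α_n^-). -/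
/-!
For any zero-one matrix `B` with zero diagonal, the partial column sum `∑_{i<k} b_ij` is at most
`α_j^-` and at most the number of rows `i < k` with `i ≠ j`; this is the Fulkerson–Chen term of
column `j`. Summing over `j` gives `∑_{i<k} α_i^+`, so equality in the Fulkerson–Chen inequality
at `k` forces every partial column sum of every realization of the degrees to equal its
Fulkerson–Chen term. Each entry `b_ij` is then the difference of two such terms, which depend only
on the degree sequence.
-/

open Finset

section PrefixColSum

variable {n : ℕ}

def prefixColSum (n : ℕ) (B : Fin n → Fin n → ℕ) (k : ℕ) (j : Fin n) : ℕ :=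
  ∑ i : Fin n, if (i : ℕ) < k then B i j else 0

def fcCap (n : ℕ) (d : Fin n → ℕ) (k : ℕ) (j : Fin n) : ℕ :=
  if (j : ℕ) < k then min (d j) (k - 1) else min (d j) k

def FulkersonChenTight (n : ℕ) (B : Fin n → Fin n → ℕ) : Prop :=
  ∀ k : ℕ, 1 ≤ k → k ≤ n →
    ∑ j, fcCap n (indeg n B) k j = ∑ i : Fin n, if (i : ℕ) < k then outdeg n B i else 0

lemma prefixColSum_succ (B : Fin n → Fin n → ℕ) (i j : Fin n) :
    prefixColSum n B ((i : ℕ) + 1) j = prefixColSum n B i j + B i j := by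
  have hsplit : ∀ x : Fin n, (if (x : ℕ) < i + 1 then B x j else 0)
      = (if (x : ℕ) < i then B x j else 0) + (if x = i then B x j else 0) := by
    intro x
    rcases lt_trichotomy (x : ℕ) i with h | h | h
    · simp [h, Nat.lt_succ_of_lt h, Fin.ne_of_lt h]
    · simp [Fin.ext h]
    · simp [Fin.ne_of_gt h, not_lt.mpr h.le, not_lt.mpr (Nat.succ_le_of_lt h)]
  simp only [prefixColSum, hsplit, sum_add_distrib, sum_ite_eq', mem_univ, if_true]

lemma prefixColSum_le_indeg (B : Fin n → Fin n → ℕ) (k : ℕ) (j : Fin n) :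
    prefixColSum n B k j ≤ indeg n B j :=
  sum_le_sum fun i _ => by split_ifs <;> simp

lemma prefixColSum_le_card_erase {B : Fin n → Fin n → ℕ} (h01 : ZeroOne n B)
    (hdiag : ZeroDiag n B) (k : ℕ) (j : Fin n) :
    prefixColSum n B k j ≤ #((range k).erase (j : ℕ)) := by
  calc prefixColSum n B k j
      ≤ ∑ i : Fin n, if (i : ℕ) < k ∧ i ≠ j then 1 else 0 := by
        refine sum_le_sum fun i _ => ?_
        by_cases hij : i = j
        · subst hij; simp [hdiag i]
        · rcases h01 i j with h | h <;> split_ifs <;> simp_all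
    _ = #{i : Fin n | (i : ℕ) < k ∧ i ≠ j} := by rw [sum_boole, Nat.cast_id]
    _ ≤ #((range k).erase (j : ℕ)) := by
        refine card_le_card_of_injOn Fin.val (fun i hi => ?_) Fin.val_injective.injOn
        simp only [coe_filter, mem_univ, true_and, Set.mem_ofPred_eq] at hi
        simpa [Fin.val_ne_iff] using hi

lemma prefixColSum_le_fcCap {B : Fin n → Fin n → ℕ} (h01 : ZeroOne n B)
    (hdiag : ZeroDiag n B) (k : ℕ) (j : Fin n) :
    prefixColSum n B k j ≤ fcCap n (indeg n B) k j := by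
  have hcard := prefixColSum_le_card_erase h01 hdiag k j
  have hin := prefixColSum_le_indeg B k j
  rw [card_erase_eq_ite, card_range] at hcard
  simp only [mem_range] at hcard
  unfold fcCap
  split_ifs at hcard ⊢ <;> exact le_min hin hcard

lemma sum_prefixColSum (B : Fin n → Fin n → ℕ) (k : ℕ) :
    ∑ j, prefixColSum n B k j = ∑ i : Fin n, if (i : ℕ) < k then outdeg n B i else 0 := by
  simp only [prefixColSum, outdeg]
  rw [sum_comm]
  exact sum_congr rfl fun i _ => by split_ifs <;> simp

lemma prefixColSum_eq_fcCap {B : Fin n → Fin n → ℕ} (h01 : ZeroOne n B) (hdiag : ZeroDiag n B)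
    (hfc : FulkersonChenTight n B)
    {k : ℕ} (hk : k ≤ n) (j : Fin n) :
    prefixColSum n B k j = fcCap n (indeg n B) k j := by
  rcases Nat.eq_zero_or_pos k with rfl | hk0
  · simp [prefixColSum, fcCap]
  · have hsum : ∑ j, prefixColSum n B k j = ∑ j, fcCap n (indeg n B) k j := by
      rw [sum_prefixColSum, hfc k hk0 hk]
    exact (sum_eq_sum_iff_of_le fun j _ => prefixColSum_le_fcCap h01 hdiag k j).mp hsum j
      (mem_univ j)

lemma entry_eq_fcCap_sub {B : Fin n → Fin n → ℕ} (h01 : ZeroOne n B) (hdiag : ZeroDiag n B)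
    (hfc : FulkersonChenTight n B)
    (i j : Fin n) :
    B i j = fcCap n (indeg n B) ((i : ℕ) + 1) j - fcCap n (indeg n B) i j := by
  rw [← prefixColSum_eq_fcCap h01 hdiag hfc i.isLt,
    ← prefixColSum_eq_fcCap h01 hdiag hfc i.isLt.le, prefixColSum_succ, Nat.add_sub_cancel_left]

end PrefixColSum

theorem stmt3_general (n : ℕ) (A : Fin n → Fin n → ℕ)
    (h01 : ZeroOne n A) (hdiag : ZeroDiag n A)
    (hfc : ∀ k : ℕ, 1 ≤ k → k ≤ n →
      (∑ i : Fin n, if (i : ℕ) < k then min (indeg n A i) (k - 1) else min (indeg n A i) k)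
        = ∑ i : Fin n, if (i : ℕ) < k then outdeg n A i else 0) :
    UniqueRealization n A := by
  intro B hB01 hBdiag hout hin
  have hinB : indeg n B = indeg n A := funext hin
  have houtB : outdeg n B = outdeg n A := funext hout
  have hfcB : FulkersonChenTight n B := by
    rw [FulkersonChenTight, hinB, houtB]
    exact hfc
  funext i j
  rw [entry_eq_fcCap_sub hB01 hBdiag hfcB, entry_eq_fcCap_sub h01 hdiag hfc, hinB]

/-- equality in the Fulkerson–Chen inequalities implies `A` is the unique
zero-one matrix with zero diagonal having its row and column sums. -/
theorem stmt3 (n : ℕ) (A : Fin n → Fin n → ℕ)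
    (h01 : ZeroOne n A) (hdiag : ZeroDiag n A)
    (hlex : PosLex n (outdeg n A) (indeg n A))
    (hfc : ∀ k : ℕ, 1 ≤ k → k ≤ n →
      (∑ i : Fin n, if (i : ℕ) < k then min (indeg n A i) (k - 1) else min (indeg n A i) k)
        = ∑ i : Fin n, if (i : ℕ) < k then outdeg n A i else 0) :
    UniqueRealization n A :=
  stmt3_general n A h01 hdiag hfc
end

section
/- Let A = [a_ij] be the n×n zero-one adjacency matrix (with zero diagonal) of a loopless digraph G on vertices v_1,…,v_n (with no ordering assumption on the degree sequence). If for every triple of distinct indices i, j, k with i < j, a_jk = 1 implies a_ik = 1, then G contains no 2-switch and no induced directed 3-cycle (i.e., G is a threshold digraph). -/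
/-! Under the nesting condition an earlier row dominates every later one off their two diagonal
positions. In a 2-switch the earlier of the two tails `w, y`, and in an induced 3-cycle its
earliest vertex, would then have an arc that the configuration forbids. -/

theorem Nested.ne_zero_of_lt {n : ℕ} {A : Fin n → Fin n → ℕ} (hnest : Nested n A)
    {i j k : Fin n} (hij : i < j) (hik : i ≠ k) (hjk : j ≠ k) (hjk_arc : A j k = 1) :
    A i k ≠ 0 := by
  rw [hnest i j k hij.ne hik hjk hij hjk_arc]
  exact one_ne_zero

theorem Nested.not_hasTwoSwitch {n : ℕ} {A : Fin n → Fin n → ℕ} (hnest : Nested n A) :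
    ¬ HasTwoSwitch n A := by
  rintro ⟨w, x, y, z, hwx, hwy, hwz, hxy, _, hyz, awx, ayz, awz, ayx⟩
  rcases lt_or_gt_of_ne hwy with hlt | hgt
  · exact hnest.ne_zero_of_lt hlt hwz hyz ayz awz
  · exact hnest.ne_zero_of_lt hgt hxy.symm hwx awx ayx

theorem Nested.not_hasInducedC3 {n : ℕ} {A : Fin n → Fin n → ℕ} (hnest : Nested n A) :
    ¬ HasInducedC3 n A := by
  rintro ⟨x, y, z, hxy, hxz, hyz, axy, ayz, azx, ayx, azy, axz⟩
  rcases lt_or_gt_of_ne hxy with hxy_lt | hyx_lt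
  · exact hnest.ne_zero_of_lt hxy_lt hxz hyz ayz axz
  rcases lt_or_gt_of_ne hyz with hyz_lt | hzy_lt
  · exact hnest.ne_zero_of_lt hyz_lt hxy.symm hxz.symm azx ayx
  · exact hnest.ne_zero_of_lt (hzy_lt.trans hyx_lt) hyz.symm hxy axy azy

theorem stmt5_general (n : ℕ) (A : Fin n → Fin n → ℕ)
    (hnest : Nested n A) :
    ¬ HasTwoSwitch n A ∧ ¬ HasInducedC3 n A :=
  ⟨hnest.not_hasTwoSwitch, hnest.not_hasInducedC3⟩

/-- Corollary 1: the nesting condition implies that `G` is threshold,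
with no ordering assumption on the degree sequence. -/
theorem stmt5 (n : ℕ) (A : Fin n → Fin n → ℕ)
    (h01 : ZeroOne n A) (hdiag : ZeroDiag n A)
    (hnest : Nested n A) :
    ¬ HasTwoSwitch n A ∧ ¬ HasInducedC3 n A :=
  stmt5_general n A hnest
end

section
/- Let A = [a_ij] be the n×n zero-one adjacency matrix (with zero diagonal) of a threshold digraph G on vertices v_1,…,v_n with in-degrees α_j^- = Σ_i a_ij, and suppose for every triple of distinct indices i, j, k with i < j, a_jk = 1 implies a_ik = 1. Then A equals the matrix constructed from the sequence β = (α_1^-,…,α_n^-) by the rule a_ij = 1 if (i < j and i ≤ β_j) or (i > j and i ≤ β_j + 1), and a_ij = 0 otherwise; in other words, A is the unique zero-one matrix with zero diagonal satisfying that adjacency condition and having column sums α_1^-,…,α_n^-. -/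
/-!
Removing the vertex `v_j` from the vertex order leaves the other vertices in the order of
`Fin.succAbove j`. The nesting condition says exactly that the in-neighbours of `v_j` form an
initial segment of that order, and an initial segment is determined by its size, the in-degree
of `v_j`. Hence every column of the matrix is determined by its column sum.
-/

open Finset

theorem Fin.mem_iff_lt_card_of_isLowerSet {m : ℕ} {s : Finset (Fin m)}
    (hs : IsLowerSet (s : Set (Fin m))) (k : Fin m) : k ∈ s ↔ (k : ℕ) < #s := by
  constructor
  · intro hk
    have hsub : Iic k ⊆ s := fun x hx => hs (mem_Iic.mp hx) hk
    simpa [Fin.card_Iic, Nat.succ_le_iff] using card_le_card hsub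
  · intro hlt
    by_contra hk
    have hsub : s ⊆ Iio k := fun x hx =>
      mem_Iio.mpr (lt_of_not_ge fun hkx => hk (hs hkx hx))
    have := card_le_card hsub
    rw [Fin.card_Iio] at this
    omega

section Column

variable {m : ℕ} {A : Fin (m + 1) → Fin (m + 1) → ℕ}

theorem isLowerSet_column_of_nested (hnest : Nested (m + 1) A) (j : Fin (m + 1)) :
    IsLowerSet (({k | A (j.succAbove k) j = 1} : Finset (Fin m)) : Set (Fin m)) := by
  intro k l hlk hk
  simp only [coe_filter, mem_univ, true_and, Set.mem_ofPred_eq] at hk ⊢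
  rcases hlk.eq_or_lt with rfl | hlt
  · exact hk
  exact hnest _ _ _ (Fin.succAbove_right_injective.ne hlt.ne) (Fin.succAbove_ne j l)
    (Fin.succAbove_ne j k) (Fin.strictMono_succAbove j hlt) hk

theorem indeg_eq_card_column (h01 : ZeroOne (m + 1) A) (hdiag : ZeroDiag (m + 1) A)
    (j : Fin (m + 1)) : indeg (m + 1) A j = #{k | A (j.succAbove k) j = 1} := by
  rw [indeg, Fin.sum_univ_succAbove _ j, hdiag, zero_add, card_filter]
  refine sum_congr rfl fun k _ => ?_
  rcases h01 (j.succAbove k) j with h | h <;> simp [h]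

theorem column_eq_one_iff_of_nested (h01 : ZeroOne (m + 1) A) (hdiag : ZeroDiag (m + 1) A)
    (hnest : Nested (m + 1) A) (j : Fin (m + 1)) (k : Fin m) :
    A (j.succAbove k) j = 1 ↔ (k : ℕ) < indeg (m + 1) A j := by
  rw [indeg_eq_card_column h01 hdiag, ← Fin.mem_iff_lt_card_of_isLowerSet
    (isLowerSet_column_of_nested hnest j)]
  simp

end Column

theorem Fin.succAbove_lt_or_lt_and_le_iff {m d : ℕ} (j : Fin (m + 1)) (k : Fin m) :
    ((j.succAbove k : ℕ) < j ∧ (j.succAbove k : ℕ) < d) ∨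
      ((j : ℕ) < j.succAbove k ∧ (j.succAbove k : ℕ) ≤ d) ↔ (k : ℕ) < d := by
  rcases lt_or_ge k.castSucc j with hk | hk
  · rw [Fin.lt_def, Fin.val_castSucc] at hk
    rw [Fin.succAbove_of_castSucc_lt _ _ hk, Fin.val_castSucc]
    omega
  · rw [Fin.le_def, Fin.val_castSucc] at hk
    rw [Fin.succAbove_of_le_castSucc _ _ hk, Fin.val_succ]
    omega

theorem eq_ite_indeg_of_nested {n : ℕ} {A : Fin n → Fin n → ℕ} (h01 : ZeroOne n A)
    (hdiag : ZeroDiag n A) (hnest : Nested n A) (i j : Fin n) :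
    A i j = if ((i : ℕ) < (j : ℕ) ∧ (i : ℕ) < indeg n A j) ∨
        ((j : ℕ) < (i : ℕ) ∧ (i : ℕ) ≤ indeg n A j) then 1 else 0 := by
  cases n with
  | zero => exact i.elim0
  | succ m =>
    rcases eq_or_ne i j with rfl | hij
    · rw [hdiag, if_neg]
      omega
    obtain ⟨k, rfl⟩ := Fin.exists_succAbove_eq hij
    simp only [Fin.succAbove_lt_or_lt_and_le_iff, ← column_eq_one_iff_of_nested h01 hdiag hnest]
    rcases h01 (j.succAbove k) j with h | h <;> simp [h]

theorem stmt7_general (n : ℕ) (A : Fin n → Fin n → ℕ)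
    (h01 : ZeroOne n A) (hdiag : ZeroDiag n A)
    (hnest : Nested n A) :
    (∀ i j : Fin n, A i j =
      if ((i : ℕ) < (j : ℕ) ∧ (i : ℕ) < indeg n A j) ∨
         ((j : ℕ) < (i : ℕ) ∧ (i : ℕ) ≤ indeg n A j)
      then 1 else 0) ∧
    (∀ B : Fin n → Fin n → ℕ, ZeroOne n B → ZeroDiag n B → Nested n B →
      (∀ j, indeg n B j = indeg n A j) → B = A) := by
  refine ⟨eq_ite_indeg_of_nested h01 hdiag hnest, fun B hB01 hBdiag hBnest hBdeg => ?_⟩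
  funext i j
  rw [eq_ite_indeg_of_nested h01 hdiag hnest i j, eq_ite_indeg_of_nested hB01 hBdiag hBnest i j,
    hBdeg j]

/-- Corollary 2, second part: a threshold digraph satisfying the nesting
condition equals the matrix constructed from the sequence of its in-degrees; it is the
unique zero-one zero-diagonal matrix satisfying the nesting condition with those
column sums. -/
theorem stmt7 (n : ℕ) (A : Fin n → Fin n → ℕ)
    (h01 : ZeroOne n A) (hdiag : ZeroDiag n A)
    (hsw : ¬ HasTwoSwitch n A) (hc3 : ¬ HasInducedC3 n A)
    (hnest : Nested n A) :
    (∀ i j : Fin n, A i j =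
      if ((i : ℕ) < (j : ℕ) ∧ (i : ℕ) < indeg n A j) ∨
         ((j : ℕ) < (i : ℕ) ∧ (i : ℕ) ≤ indeg n A j)
      then 1 else 0) ∧
    (∀ B : Fin n → Fin n → ℕ, ZeroOne n B → ZeroDiag n B → Nested n B →
      (∀ j, indeg n B j = indeg n A j) → B = A) :=
  stmt7_general n A h01 hdiag hnest
end

section
/- Let TD(n) denote the number of isomorphism classes of threshold digraphs on n vertices. Then n^n / n! ≤ TD(n) ≤ n^n; equivalently, n^n ≤ n! · TD(n) and TD(n) ≤ n^n. -/
/-- Threshold digraphs on `n` vertices, as zero-diagonal boolean adjacency matrices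
with no 2-switch and no induced directed 3-cycle. -/
def IsThresholdB (n : ℕ) (A : Fin n → Fin n → Bool) : Prop :=
  (∀ i, A i i = false) ∧
  (¬ ∃ w x y z : Fin n, w ≠ x ∧ w ≠ y ∧ w ≠ z ∧ x ≠ y ∧ x ≠ z ∧ y ≠ z ∧
      A w x = true ∧ A y z = true ∧ A w z = false ∧ A y x = false) ∧
  (¬ ∃ x y z : Fin n, x ≠ y ∧ x ≠ z ∧ y ≠ z ∧
      A x y = true ∧ A y z = true ∧ A z x = true ∧
      A y x = false ∧ A z y = false ∧ A x z = false)

/-- Isomorphism of threshold digraphs: a permutation of the vertices carrying the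
arcs of one onto the arcs of the other. -/
def ThresholdIso (n : ℕ)
    (A B : {M : Fin n → Fin n → Bool // IsThresholdB n M}) : Prop :=
  ∃ σ : Equiv.Perm (Fin n), ∀ i j, A.1 (σ i) (σ j) = B.1 i j

/-
A code `f : Fin n → Fin n` determines a canonical digraph in which the in-neighbourhood of each
vertex `k` is `{i ≠ k | i < t k}`, for a threshold `t k ∈ {0, …, n} \ {k + 1}` read off from `f k`.
Canonical digraphs are threshold digraphs (a 2-switch or an induced 3-cycle would give a cyclic
chain of strict inequalities between thresholds and vertices), and distinct codes give distinct
canonical digraphs. Conversely, in a threshold digraph the absence of 2-switches makes any two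
out-neighbourhoods comparable up to the two vertices themselves; ordering the vertices by
decreasing out-degree and then decreasing in-degree, where the absence of induced 3-cycles settles
ties, makes them nested, so every in-neighbourhood is an initial segment and the digraph is
isomorphic to a canonical one. Hence the `n ^ n` codes map onto the isomorphism classes, and
injectively into the threshold digraphs, each class of which has at most `n!` members.
-/

open Finset

namespace ThresholdDigraph

variable {n : ℕ}

-- The canonical digraph of `f` has in-neighbourhoods `{i ≠ k | i < t}` with `t ≤ n`; since
-- `t = k` and `t = k + 1` give the same set, `succAbove` skips `k + 1` to list each once.
def threshold (f : Fin n → Fin n) (k : Fin n) : Fin (n + 1) := k.succ.succAbove (f k)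

def canonical (f : Fin n → Fin n) (i k : Fin n) : Bool :=
  decide ((i : ℕ) < threshold f k ∧ i ≠ k)

lemma canonical_eq_true {f : Fin n → Fin n} {i k : Fin n} :
    canonical f i k = true ↔ (i : ℕ) < threshold f k ∧ i ≠ k := by
  simp [canonical]

lemma threshold_ne_succ (f : Fin n → Fin n) (k : Fin n) : (threshold f k : ℕ) ≠ k + 1 :=
  fun h => Fin.succAbove_ne _ _ (Fin.ext h)

lemma isThresholdB_canonical (f : Fin n → Fin n) : IsThresholdB n (canonical f) := by
  simp only [IsThresholdB, canonical, decide_eq_true_eq, decide_eq_false_iff_not]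
  refine ⟨fun i h => h.2 rfl, ?_, ?_⟩
  · rintro ⟨w, x, y, z, hwx, -, hwz, hxy, -, -, hx, hz, hwz', hyx'⟩
    simp_all only [ne_eq, not_false_eq_true, and_true, not_lt]
    omega
  · rintro ⟨x, y, z, hxy, hxz, hyz, hy, hz, hx, hyx', hzy', hxz'⟩
    simp_all only [ne_eq, not_false_eq_true, and_true, not_lt]
    omega

lemma threshold_eq_of_column_eq {k : Fin n} {t t' : Fin (n + 1)}
    (ht : (t : ℕ) ≠ k + 1) (ht' : (t' : ℕ) ≠ k + 1)
    (h : ∀ i : Fin n, (i : ℕ) < t ∧ i ≠ k ↔ (i : ℕ) < t' ∧ i ≠ k) : t = t' := by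
  wlog hlt : t < t' generalizing t t'
  · rcases (not_lt.mp hlt).lt_or_eq with h' | h'
    · exact (this ht' ht (fun i => (h i).symm) h').symm
    · exact h'.symm
  -- the first vertex `≥ t` other than `k` lies in column `t'` but not in column `t`
  obtain ⟨i, hti, hit', hik⟩ : ∃ i : Fin n, (t : ℕ) ≤ i ∧ (i : ℕ) < t' ∧ i ≠ k := by
    by_cases htk : (t : ℕ) = k
    · exact ⟨⟨k + 1, by omega⟩, by simp; omega, by simp; omega, fun h => by simp [Fin.ext_iff] at h⟩
    · exact ⟨⟨t, by omega⟩, le_rfl, hlt, fun h => htk (by simp [← h])⟩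
  exact absurd ((h i).2 ⟨hit', hik⟩).1 (not_lt.mpr hti)

lemma canonical_injective : Function.Injective (canonical (n := n)) := by
  intro f g hfg
  funext k
  refine Fin.succAbove_right_injective (threshold_eq_of_column_eq (threshold_ne_succ f k)
    (threshold_ne_succ g k) fun i => ?_)
  exact (canonical_eq_true (f := f)).symm.trans (hfg ▸ canonical_eq_true)

lemma exists_threshold_of_column {col : Fin n → Bool} {k : Fin n} (hk : col k = false)
    (hcol : ∀ i j, i < j → i ≠ k → col j = true → col i = true) :
    ∃ t : Fin (n + 1), (t : ℕ) ≠ k + 1 ∧ ∀ i, col i = true ↔ (i : ℕ) < t ∧ i ≠ k := by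
  set t := ({i | col i = true} : Finset (Fin n)).sup Fin.succ
  have mem_of_lt : ∀ i : Fin n, (i : ℕ) < t → ∃ m, col m = true ∧ i ≤ m := by
    intro i hi
    obtain ⟨m, hm, him⟩ := Finset.lt_sup_iff.mp (show i.castSucc < t from hi)
    exact ⟨m, (mem_filter.mp hm).2, Fin.le_def.mpr (by simp [Fin.lt_def] at him; omega)⟩
  have lt_of_mem : ∀ i, col i = true → (i : ℕ) < t := fun i hi =>
    Fin.le_def.mp (le_sup (f := Fin.succ) (mem_filter.mpr ⟨mem_univ i, hi⟩))
  refine ⟨t, fun htk => ?_, fun i => ⟨fun hi => ⟨lt_of_mem i hi, ?_⟩, fun ⟨hi, hik⟩ => ?_⟩⟩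
  · obtain ⟨m, hm, hkm⟩ := mem_of_lt k (by omega)
    have hmk : m ≠ k := fun h => by simp_all
    have := lt_of_mem m hm
    exact hmk (Fin.ext (by rw [Fin.le_def] at hkm; omega))
  · rintro rfl; simp_all
  · obtain ⟨m, hm, him⟩ := mem_of_lt i hi
    rcases him.lt_or_eq with him | rfl
    exacts [hcol i m him hik hm, hm]

lemma exists_canonical_eq {B : Fin n → Fin n → Bool} (hd : ∀ i, B i i = false)
    (hB : ∀ i j k, i < j → i ≠ k → B j k = true → B i k = true) : ∃ f, canonical f = B := by
  choose t ht hcol using fun k =>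
    exists_threshold_of_column (col := (B · k)) (hd k) (fun i j => hB i j k)
  choose f hf using fun k =>
    Fin.exists_succAbove_eq (x := t k) (y := k.succ) (fun h => ht k (by rw [h, Fin.val_succ]))
  refine ⟨f, funext₂ fun i k => ?_⟩
  rw [Bool.eq_iff_iff, canonical_eq_true, threshold, hf, hcol]

section Threshold

variable {M : Fin n → Fin n → Bool}

def outNbhd (M : Fin n → Fin n → Bool) (u : Fin n) : Finset (Fin n) := {k | M u k = true}

def inNbhd (M : Fin n → Fin n → Bool) (u : Fin n) : Finset (Fin n) := {k | M k u = true}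

@[simp] lemma mem_outNbhd {u k : Fin n} : k ∈ outNbhd M u ↔ M u k = true := by simp [outNbhd]

@[simp] lemma mem_inNbhd {u k : Fin n} : k ∈ inNbhd M u ↔ M k u = true := by simp [inNbhd]

lemma ne_of_arc (hM : IsThresholdB n M) {u v : Fin n} (h : M u v = true) : u ≠ v := by
  rintro rfl; simp [hM.1 u] at h

lemma outNbhd_erase_subset_total (hM : IsThresholdB n M) {u v : Fin n} (huv : u ≠ v) :
    (outNbhd M v).erase u ⊆ outNbhd M u ∨ (outNbhd M u).erase v ⊆ outNbhd M v := by
  by_contra! h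
  obtain ⟨⟨x, hx, hux⟩, ⟨z, hz, hvz⟩⟩ := And.imp not_subset.mp not_subset.mp h
  simp only [mem_erase, mem_outNbhd, Bool.not_eq_true] at hx hz hux hvz
  exact hM.2.1 ⟨u, z, v, x, ne_of_arc hM hz.2, huv, hx.1.symm, hz.1, fun h => by simp_all,
    ne_of_arc hM hx.2, hz.2, hx.2, hux, hvz⟩

lemma inNbhd_erase_subset_total (hM : IsThresholdB n M) {u v : Fin n} (huv : u ≠ v) :
    (inNbhd M v).erase u ⊆ inNbhd M u ∨ (inNbhd M u).erase v ⊆ inNbhd M v := by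
  by_contra! h
  obtain ⟨⟨x, hx, hxu⟩, ⟨z, hz, hzv⟩⟩ := And.imp not_subset.mp not_subset.mp h
  simp only [mem_erase, mem_inNbhd, Bool.not_eq_true] at hx hz hxu hzv
  exact hM.2.1 ⟨z, u, x, v, ne_of_arc hM hz.2, fun h => by simp_all, hz.1, hx.1.symm,
    huv, ne_of_arc hM hx.2, hz.2, hx.2, hzv, hxu⟩

-- The positive lexicographic order of the paper: decreasing out-degree, then decreasing in-degree.
def degKey (M : Fin n → Fin n → Bool) (u : Fin n) : ℕᵒᵈ ×ₗ ℕᵒᵈ :=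
  toLex (OrderDual.toDual #(outNbhd M u), OrderDual.toDual #(inNbhd M u))

lemma degKey_le_iff {u v : Fin n} : degKey M u ≤ degKey M v ↔
    #(outNbhd M v) < #(outNbhd M u) ∨
      #(outNbhd M u) = #(outNbhd M v) ∧ #(inNbhd M v) ≤ #(inNbhd M u) := by
  simp [degKey, Prod.Lex.toLex_le_toLex]

lemma card_inNbhd_lt (hM : IsThresholdB n M) {u v k : Fin n} (huv : M u v = true)
    (hvu : M v u = false) (hvk : M v k = true) (huk : M u k = false) :
    #(inNbhd M u) < #(inNbhd M v) := by
  have hku : k ≠ u := fun h => by simp_all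
  have hkv : k ≠ v := (ne_of_arc hM hvk).symm
  have hu : u ∈ inNbhd M v := mem_inNbhd.mpr huv
  rcases inNbhd_erase_subset_total hM (ne_of_arc hM huv) with h | h
  · by_contra! hle
    have hlt : #((inNbhd M v).erase u) < #(inNbhd M u) := by
      rw [card_erase_of_mem hu]; have := card_pos.mpr ⟨u, hu⟩; omega
    obtain ⟨w, hwu, hwv⟩ := not_subset.mp fun h' => (card_le_card h').not_gt hlt
    rw [mem_inNbhd] at hwu
    have hwv : M w v = false := by simpa [ne_of_arc hM hwu] using hwv
    have hwk : w ≠ k := by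
      rintro rfl
      exact hM.2.2 ⟨u, v, w, ne_of_arc hM huv, hku.symm, hkv.symm, huv, hvk, hwu, hvu, hwv, huk⟩
    cases hwk' : M w k
    · exact hM.2.1 ⟨w, u, v, k, ne_of_arc hM hwu, fun h => by simp_all, hwk,
        ne_of_arc hM huv, hku.symm, hkv.symm, hwu, hvk, hwk', hvu⟩
    · exact hM.2.1 ⟨w, k, u, v, hwk, ne_of_arc hM hwu, fun h => by simp_all, hku, hkv,
        ne_of_arc hM huv, hwk', huv, hwv, huk⟩
  · rw [erase_eq_of_notMem (by simpa using hvu)] at h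
    exact card_lt_card ((ssubset_iff_of_subset h).mpr ⟨u, hu, by simp [hM.1 u]⟩)

lemma outNbhd_erase_subset_of_degKey_le (hM : IsThresholdB n M) {u v : Fin n} (huv : u ≠ v)
    (h : degKey M u ≤ degKey M v) : (outNbhd M v).erase u ⊆ outNbhd M u := by
  rw [degKey_le_iff] at h
  by_contra hsub
  obtain ⟨k, hk, huk⟩ := not_subset.mp hsub
  have hkv : k ∈ outNbhd M v := mem_of_mem_erase hk
  have hsub' : (outNbhd M u).erase v ⊆ (outNbhd M v).erase k := fun x hx =>
    mem_erase.mpr ⟨fun hxk => huk (hxk ▸ mem_of_mem_erase hx),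
      (outNbhd_erase_subset_total hM huv).resolve_left hsub hx⟩
  have hcard := card_le_card hsub'
  rw [card_erase_of_mem hkv] at hcard
  have := card_pos.mpr ⟨k, hkv⟩
  by_cases hvu : v ∈ outNbhd M u
  · rw [card_erase_of_mem hvu] at hcard
    have := card_pos.mpr ⟨v, hvu⟩
    -- equal out-degrees force `(outNbhd M u).erase v = (outNbhd M v).erase k`, so `v ↛ u`
    have hvu' : M v u = false := by
      by_contra! hvu'
      have heq := eq_of_subset_of_card_le hsub'
        (by rw [card_erase_of_mem hkv, card_erase_of_mem hvu]; omega)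
      have hu : u ∈ (outNbhd M v).erase k :=
        mem_erase.mpr ⟨(ne_of_mem_erase hk).symm, by simpa using hvu'⟩
      simp [← heq, hM.1 u] at hu
    exact (card_inNbhd_lt hM (mem_outNbhd.mp hvu) hvu' (mem_outNbhd.mp hkv)
      (by simpa using huk)).not_ge (h.resolve_left (by omega)).2
  · rw [erase_eq_of_notMem hvu] at hcard
    omega

lemma exists_perm_outNbhd_erase_subset (hM : IsThresholdB n M) :
    ∃ σ : Equiv.Perm (Fin n), ∀ i j, i < j → (outNbhd M (σ j)).erase (σ i) ⊆ outNbhd M (σ i) :=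
  ⟨Tuple.sort (degKey M), fun _ _ hij => outNbhd_erase_subset_of_degKey_le hM
    ((Tuple.sort _).injective.ne hij.ne) (Tuple.monotone_sort (degKey M) hij.le)⟩

lemma exists_thresholdIso_canonical (hM : IsThresholdB n M) :
    ∃ f, ThresholdIso n ⟨M, hM⟩ ⟨canonical f, isThresholdB_canonical f⟩ := by
  obtain ⟨σ, hσ⟩ := exists_perm_outNbhd_erase_subset hM
  obtain ⟨f, hf⟩ := exists_canonical_eq (B := fun i j => M (σ i) (σ j)) (fun i => hM.1 _)
    fun i j k hij hik hjk => by
      simpa using hσ i j hij (mem_erase.mpr ⟨σ.injective.ne (Ne.symm hik), by simpa using hjk⟩)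
  exact ⟨f, σ, fun i j => (congrFun₂ hf i j).symm⟩

end Threshold

lemma thresholdIso_equivalence : Equivalence (ThresholdIso n) where
  refl _ := ⟨1, fun _ _ => rfl⟩
  symm := fun ⟨σ, h⟩ => ⟨σ⁻¹, fun i j => by simp [← h]⟩
  trans := fun ⟨σ, h⟩ ⟨τ, h'⟩ => ⟨τ.trans σ, fun i j => (h (τ i) (τ j)).trans (h' i j)⟩

lemma card_le_card_quot_mul_factorial :
    Nat.card {M // IsThresholdB n M} ≤ Nat.card (Quot (ThresholdIso n)) * n.factorial := by
  have hrep : ∀ A, ThresholdIso n (Quot.mk _ A).out A := fun A =>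
    thresholdIso_equivalence.eqvGen_iff.mp (Quot.eq.mp (Quot.out_eq _))
  choose σ hσ using hrep
  have hinj : Function.Injective fun A => (Quot.mk (ThresholdIso n) A, σ A) := by
    intro A B hAB
    obtain ⟨hq, hσAB⟩ := Prod.mk.inj hAB
    refine Subtype.ext (funext₂ fun i j => ?_)
    rw [← hσ A, ← hσ B, hq, hσAB]
  simpa [Nat.card_prod, Fintype.card_perm] using Nat.card_le_card_of_injective _ hinj

end ThresholdDigraph

/-- Corollary 3: if `TD n` is the number of isomorphism classes of
threshold digraphs on `n` vertices, then `n^n / n! ≤ TD n ≤ n^n`. -/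
theorem stmt8 (n : ℕ) (TD : ℕ)
    (hTD : TD = Nat.card (Quot (ThresholdIso n))) :
    n ^ n ≤ n.factorial * TD ∧ TD ≤ n ^ n := by
  open ThresholdDigraph in
  subst hTD
  let q (f : Fin n → Fin n) : Quot (ThresholdIso n) :=
    Quot.mk _ ⟨canonical f, isThresholdB_canonical f⟩
  have hq : Function.Surjective q := Quot.ind fun ⟨A, hA⟩ => by
    obtain ⟨f, hf⟩ := exists_thresholdIso_canonical hA
    exact ⟨f, (Quot.sound hf).symm⟩
  have hcanonical : Function.Injective fun f => (⟨canonical f, isThresholdB_canonical f⟩ :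
      {M // IsThresholdB n M}) := fun f g h => canonical_injective (congrArg Subtype.val h)
  constructor
  · calc n ^ n = Nat.card (Fin n → Fin n) := by simp
      _ ≤ Nat.card {M // IsThresholdB n M} := Nat.card_le_card_of_injective _ hcanonical
      _ ≤ _ := card_le_card_quot_mul_factorial
      _ = _ := mul_comm _ _
  · simpa using Nat.card_le_card_of_surjective q hq
end

section
/- Let α = ((α_1^+,α_1^-),…,(α_n^+,α_n^-)) be a sequence of pairs of nonnegative integers in positive lexicographic order with α_i^- ≤ n − 1 for all i. If Σ_{i=1}^n α_i^+ = Σ_{i=1}^n α_i^- and for every k with 1 ≤ k < n, Σ_{i=1}^k min(α_i^-, k−1) + Σ_{i=k+1}^n min(α_i^-, k) ≥ Σ_{i=1}^k α_i^+, then there exists an n×n zero-one matrix A = [a_ij] with zero diagonal whose row sums are α_1^+,…,α_n^+ and whose column sums are α_1^-,…,α_n^-. -/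
/-!
Choose a set `E` of off-diagonal cells, i.e. arcs, with at most `α⁺ᵢ` arcs in row `i` and at most
`α⁻ⱼ` in column `j`, and with `|E|` maximal. If some row `i₀` still has fewer than `α⁺ᵢ₀` arcs, let
`S` be the set of rows reachable from `i₀` by alternating paths: a non-arc `(i, j)` followed by an
arc `(i', j)` leads from `i` to `i'`. A path that ends at a non-arc into a column with spare
capacity could be flipped to enlarge `E`, so every column `j` is either full with all its arcs
coming from `S`, or receives an arc from every row of `S` other than `j`. Counting the arcs out of
`S` then violates the cut condition `∑_{i ∈ K} α⁺ᵢ ≤ ∑ⱼ min(α⁻ⱼ, |K ∖ {j}|)` for `K = S`.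

The cut condition follows from the prefix inequalities. With `k = |K| ≥ 1` it reads
`∑_{i ∈ K} (α⁺ᵢ + [α⁻ᵢ ≥ k]) ≤ ∑ⱼ min(α⁻ⱼ, k)`, and in positive lexicographic order the weights
`α⁺ᵢ + [α⁻ᵢ ≥ k]` decrease with `i`, so `K = {1, …, k}` is the worst case.
-/

open Finset

namespace Finset

lemma card_filter_insert_of_notMem {γ : Type*} [DecidableEq γ] {s : Finset γ} {x : γ}
    (p : γ → Prop) [DecidablePred p] (h : x ∉ s) :
    #{y ∈ insert x s | p y} = #{y ∈ s | p y} + if p x then 1 else 0 := by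
  rw [filter_insert]
  split_ifs <;> simp [card_insert_of_notMem, h]

lemma card_filter_erase_add_of_mem {γ : Type*} [DecidableEq γ] {s : Finset γ} {x : γ}
    (p : γ → Prop) [DecidablePred p] (h : x ∈ s) :
    #{y ∈ s.erase x | p y} + (if p x then 1 else 0) = #{y ∈ s | p y} := by
  rw [filter_erase]
  split_ifs with hp
  · exact card_erase_add_one (mem_filter.2 ⟨h, hp⟩)
  · simp [hp]

end Finset

namespace BipartiteRealization

variable {α β : Type*}

section AltPath

variable {R : α → β → Prop} {E : Finset (α × β)}

variable (R) in
def IsAltPath (E : Finset (α × β)) : α → List (β × α) → β → Prop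
  | i, [], j => R i j ∧ (i, j) ∉ E
  | i, (j, i') :: p, j' => R i j ∧ (i, j) ∉ E ∧ (i', j) ∈ E ∧ IsAltPath E i' p j'

lemma IsAltPath.exists_suffix {i i₂ : α} {j j' : β} :
    ∀ {p : List (β × α)}, IsAltPath R E i p j' → (j, i₂) ∈ p →
      ∃ q : List (β × α), q.length < p.length ∧ (i₂, j) ∈ E ∧ IsAltPath R E i₂ q j'
  | [], _, hm => absurd hm List.not_mem_nil
  | (j₁, i₁) :: t, ⟨_, _, h₁, ht⟩, hm => by
    rcases List.mem_cons.1 hm with he | hm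
    · obtain ⟨rfl, rfl⟩ := Prod.ext_iff.1 he
      exact ⟨t, by simp, h₁, ht⟩
    · obtain ⟨q, hq, hE, hq'⟩ := ht.exists_suffix hm
      exact ⟨q, by simp; omega, hE, hq'⟩

lemma IsAltPath.congr {E' : Finset (α × β)} {i : α} {j j' : β}
    (hEE' : ∀ x : α × β, x.2 ≠ j → (x ∈ E' ↔ x ∈ E)) (hj' : j' ≠ j) :
    ∀ {p : List (β × α)}, (∀ y ∈ p, y.1 ≠ j) → IsAltPath R E i p j' → IsAltPath R E' i p j'
  | [], _, ⟨hR, h⟩ => ⟨hR, by rwa [hEE' _ hj']⟩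
  | (j₁, i₁) :: t, hp, ⟨hR, h₀, h₁, ht⟩ => by
    have hj₁ : j₁ ≠ j := hp _ List.mem_cons_self
    exact ⟨hR, by rwa [hEE' _ hj₁], by rwa [hEE' _ hj₁],
      ht.congr hEE' hj' fun y hy => hp y (List.mem_cons_of_mem _ hy)⟩

variable (R) in
def AltStep (E : Finset (α × β)) (i i' : α) : Prop := ∃ j, R i j ∧ (i, j) ∉ E ∧ (i', j) ∈ E

lemma exists_isAltPath_of_reflTransGen {i i' : α} {j : β}
    (h : Relation.ReflTransGen (AltStep R E) i i') (hR : R i' j) (hi'j : (i', j) ∉ E) :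
    ∃ p, IsAltPath R E i p j := by
  induction h using Relation.ReflTransGen.head_induction_on with
  | refl => exact ⟨[], hR, hi'j⟩
  | head hstep _ ih =>
    obtain ⟨j₁, hR₁, h₀, h₁⟩ := hstep
    obtain ⟨p, hp⟩ := ih
    exact ⟨(j₁, _) :: p, hR₁, h₀, h₁, hp⟩

end AltPath

section RowDeg

variable [DecidableEq α]

def rowDeg (E : Finset (α × β)) (i : α) : ℕ := #{x ∈ E | x.1 = i}

lemma rowDeg_eq_sum_ite [DecidableEq β] [Fintype β] (E : Finset (α × β)) (i : α) :
    rowDeg E i = ∑ j, if (i, j) ∈ E then 1 else 0 := by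
  rw [sum_boole, Nat.cast_id, rowDeg]
  exact card_nbij' Prod.snd (Prod.mk i) (fun x hx => by obtain ⟨a, b⟩ := x; aesop)
    (fun b hb => by simp_all) (fun x hx => by obtain ⟨a, b⟩ := x; simp_all) (fun b _ => rfl)

lemma sum_rowDeg_eq_card [Fintype α] (E : Finset (α × β)) : ∑ i, rowDeg E i = #E :=
  (card_eq_sum_card_fiberwise (by simp)).symm

end RowDeg

section ColDeg

variable [DecidableEq β]

def colDeg (E : Finset (α × β)) (j : β) : ℕ := #{x ∈ E | x.2 = j}

lemma colDeg_eq_sum_ite [DecidableEq α] [Fintype α] (E : Finset (α × β)) (j : β) :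
    colDeg E j = ∑ i, if (i, j) ∈ E then 1 else 0 := by
  rw [sum_boole, Nat.cast_id, colDeg]
  exact card_nbij' Prod.fst (Prod.mk · j) (fun x hx => by obtain ⟨a, b⟩ := x; aesop)
    (fun b hb => by simp_all) (fun x hx => by obtain ⟨a, b⟩ := x; simp_all) (fun b _ => rfl)

lemma sum_colDeg_eq_card [Fintype β] (E : Finset (α × β)) : ∑ j, colDeg E j = #E :=
  (card_eq_sum_card_fiberwise (by simp)).symm

end ColDeg

variable [DecidableEq α] [DecidableEq β]

structure IsPartialRealization (R : α → β → Prop) (r : α → ℕ) (c : β → ℕ)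
    (E : Finset (α × β)) : Prop where
  rel : ∀ x ∈ E, R x.1 x.2
  rowDeg_le : ∀ i, rowDeg E i ≤ r i
  colDeg_le : ∀ j, colDeg E j ≤ c j

variable {R : α → β → Prop} {r : α → ℕ} {c : β → ℕ} {E : Finset (α × β)}

lemma IsPartialRealization.insert_of_lt (hE : IsPartialRealization R r c E) {i : α} {j : β}
    (hR : R i j) (hij : (i, j) ∉ E) (hi : rowDeg E i < r i) (hj : colDeg E j < c j) :
    IsPartialRealization R r c (insert (i, j) E) where
  rel x hx := by
    rcases mem_insert.1 hx with rfl | hx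
    exacts [hR, hE.rel x hx]
  rowDeg_le k := by
    rw [rowDeg, card_filter_insert_of_notMem _ hij]
    split_ifs with h
    · exact h ▸ hi
    · exact hE.rowDeg_le k
  colDeg_le k := by
    rw [colDeg, card_filter_insert_of_notMem _ hij]
    split_ifs with h
    · exact h ▸ hj
    · exact hE.colDeg_le k

lemma colDeg_insert_erase {i i' : α} {j : β} (hij : (i, j) ∉ E) (hi'j : (i', j) ∈ E) :
    colDeg (insert (i, j) (E.erase (i', j))) = colDeg E := funext fun k => by
  have hij' : (i, j) ∉ E.erase (i', j) := fun h => hij (mem_of_mem_erase h)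
  rw [colDeg, card_filter_insert_of_notMem _ hij', colDeg,
    ← card_filter_erase_add_of_mem (fun x : α × β => x.2 = k) hi'j]

lemma IsPartialRealization.insert_erase (hE : IsPartialRealization R r c E) {i i' : α} {j : β}
    (hR : R i j) (hij : (i, j) ∉ E) (hi'j : (i', j) ∈ E) (hi : rowDeg E i < r i) :
    IsPartialRealization R r c (insert (i, j) (E.erase (i', j))) ∧
      rowDeg (insert (i, j) (E.erase (i', j))) i' < r i' := by
  have hii' : i ≠ i' := by rintro rfl; exact hij hi'j
  have hij' : (i, j) ∉ E.erase (i', j) := fun h => hij (mem_of_mem_erase h)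
  have hrow : ∀ k, rowDeg (insert (i, j) (E.erase (i', j))) k + (if i' = k then 1 else 0)
      = rowDeg E k + if i = k then 1 else 0 := fun k => by
    rw [rowDeg, card_filter_insert_of_notMem _ hij', add_right_comm,
      card_filter_erase_add_of_mem _ hi'j, rowDeg]
  refine ⟨⟨fun x hx => ?_, fun k => ?_, fun k => ?_⟩, ?_⟩
  · rcases mem_insert.1 hx with rfl | hx
    exacts [hR, hE.rel x (mem_of_mem_erase hx)]
  · have := hrow k; have := hE.rowDeg_le k
    split_ifs at * <;> subst_vars <;> omega
  · rw [colDeg_insert_erase hij hi'j]; exact hE.colDeg_le k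
  · have h := hrow i'
    rw [if_pos rfl, if_neg hii'] at h
    have := hE.rowDeg_le i'
    omega

lemma IsAltPath.exists_augment (hE : IsPartialRealization R r c E) {i : α} {j' : β}
    {p : List (β × α)} (hp : IsAltPath R E i p j') (hi : rowDeg E i < r i)
    (hj' : colDeg E j' < c j') :
    ∃ E' : Finset (α × β), IsPartialRealization R r c E' ∧ #E' = #E + 1 := by
  induction hl : p.length using Nat.strong_induction_on generalizing E i p with
  | _ m ih =>
  match p, hp with
  | [], ⟨hR, hij⟩ => exact ⟨_, hE.insert_of_lt hR hij hi hj', card_insert_of_notMem hij⟩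
  | (j, i') :: t, ⟨hR, hij, hi'j, ht⟩ =>
    by_cases hjj' : j' = j
    · subst hjj'
      exact ⟨_, hE.insert_of_lt hR hij hi hj', card_insert_of_notMem hij⟩
    by_cases hrep : ∃ i₂, (j, i₂) ∈ t
    · -- column `j` recurs on the path: cut out the loop
      obtain ⟨i₂, hm⟩ := hrep
      obtain ⟨q, hq, hi₂j, hq'⟩ := ht.exists_suffix hm
      exact ih (q.length + 1) (by simp at hl; omega) hE
        (p := (j, i₂) :: q) ⟨hR, hij, hi₂j, hq'⟩ hi hj' rfl
    · rw [not_exists] at hrep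
      obtain ⟨hE', hi'⟩ := hE.insert_erase hR hij hi'j hi
      have hoff : ∀ x : α × β, x.2 ≠ j → (x ∈ insert (i, j) (E.erase (i', j)) ↔ x ∈ E) := by
        rintro ⟨a, b⟩ hb
        simp [hb]
      have ht' := ht.congr hoff hjj' fun y hy hyj => hrep y.2 (hyj ▸ hy)
      obtain ⟨E'', hE'', hcard⟩ := ih t.length (by simp at hl; omega) hE' ht' hi'
        (by rwa [colDeg_insert_erase hij hi'j]) rfl
      refine ⟨E'', hE'', ?_⟩
      rw [hcard, card_insert_of_notMem fun h => hij (mem_of_mem_erase h),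
        card_erase_add_one hi'j]

lemma sum_rowDeg_eq_sum_card [Fintype β] (S : Finset α) :
    ∑ i ∈ S, rowDeg E i = ∑ j, #{x ∈ E | x.1 ∈ S ∧ x.2 = j} := by
  simp only [rowDeg, card_filter]
  rw [sum_comm, sum_comm (s := univ)]
  refine sum_congr rfl fun x _ => ?_
  simp [ite_and]

lemma sum_min_card_le_sum_rowDeg [Fintype β] [DecidableRel R] {S : Finset α}
    (hS : ∀ i ∈ S, ∀ j, R i j → (i, j) ∉ E → colDeg E j = c j ∧ ∀ i₂, (i₂, j) ∈ E → i₂ ∈ S) :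
    ∑ j, min (c j) #{i ∈ S | R i j} ≤ ∑ i ∈ S, rowDeg E i := by
  rw [sum_rowDeg_eq_sum_card]
  refine sum_le_sum fun j _ => ?_
  by_cases hfree : ∃ i ∈ S, R i j ∧ (i, j) ∉ E
  · obtain ⟨i, hiS, hR, hij⟩ := hfree
    obtain ⟨hsat, hclosed⟩ := hS i hiS j hR hij
    have : {x ∈ E | x.1 ∈ S ∧ x.2 = j} = {x ∈ E | x.2 = j} :=
      filter_congr fun x hx => ⟨And.right, fun hxj => ⟨hclosed x.1 (hxj ▸ hx), hxj⟩⟩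
    rw [this, ← colDeg, hsat]
    exact min_le_left _ _
  · simp only [not_exists, not_and, not_not] at hfree
    refine (min_le_right _ _).trans (card_le_card_of_injOn (fun i => (i, j)) ?_ ?_)
    · intro i hi
      simp only [coe_filter, Set.mem_ofPred_eq] at hi ⊢
      exact ⟨hfree i hi.1 hi.2, hi.1, trivial⟩
    · intro i _ i' _ h
      exact (Prod.ext_iff.1 h).1

theorem exists_isPartialRealization_rowDeg_eq [Fintype α] [Fintype β] [DecidableRel R]
    (hK : ∀ K : Finset α, ∑ i ∈ K, r i ≤ ∑ j, min (c j) #{i ∈ K | R i j}) :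
    ∃ E, IsPartialRealization R r c E ∧ ∀ i, rowDeg E i = r i := by
  classical
  obtain ⟨E, hE, hmax⟩ := exists_max_image {E : Finset (α × β) | IsPartialRealization R r c E}
    card ⟨∅, mem_filter.2 ⟨mem_univ _, by simp, by simp [rowDeg], by simp [colDeg]⟩⟩
  simp only [mem_filter, mem_univ, true_and] at hE hmax
  have hnoaug : ∀ {i j p}, IsAltPath R E i p j → rowDeg E i < r i → c j ≤ colDeg E j := by
    intro i j p hp hi
    by_contra hj
    obtain ⟨E', hE', hcard⟩ := hp.exists_augment hE hi (not_le.1 hj)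
    have := hmax E' hE'
    omega
  refine ⟨E, hE, fun i₀ => (hE.rowDeg_le i₀).eq_or_lt.resolve_right fun hi₀ => ?_⟩
  let S : Finset α := {i | Relation.ReflTransGen (AltStep R E) i₀ i}
  have hS : ∀ i ∈ S, ∀ j, R i j → (i, j) ∉ E →
      colDeg E j = c j ∧ ∀ i₂, (i₂, j) ∈ E → i₂ ∈ S := by
    intro i hi j hR hij
    simp only [S, mem_filter, mem_univ, true_and] at hi
    obtain ⟨p, hp⟩ := exists_isAltPath_of_reflTransGen hi hR hij
    refine ⟨le_antisymm (hE.colDeg_le j) (hnoaug hp hi₀), fun i₂ hi₂ => ?_⟩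
    simpa [S] using hi.tail ⟨j, hR, hij, hi₂⟩
  have hlt : ∑ i ∈ S, rowDeg E i < ∑ i ∈ S, r i :=
    sum_lt_sum (fun i _ => hE.rowDeg_le i) ⟨i₀, by simp [S, Relation.ReflTransGen.refl], hi₀⟩
  have := (hK S).trans (sum_min_card_le_sum_rowDeg hS)
  omega

theorem exists_rowDeg_eq_colDeg_eq [Fintype α] [Fintype β] [DecidableRel R]
    (hK : ∀ K : Finset α, ∑ i ∈ K, r i ≤ ∑ j, min (c j) #{i ∈ K | R i j})
    (hsum : ∑ i, r i = ∑ j, c j) :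
    ∃ E : Finset (α × β), (∀ x ∈ E, R x.1 x.2) ∧ (∀ i, rowDeg E i = r i) ∧
      ∀ j, colDeg E j = c j := by
  obtain ⟨E, hE, hrow⟩ := exists_isPartialRealization_rowDeg_eq hK
  have hcol : ∑ j, colDeg E j = ∑ j, c j := by
    rw [sum_colDeg_eq_card, ← sum_rowDeg_eq_card, ← hsum]
    exact sum_congr rfl fun i _ => hrow i
  exact ⟨E, hE.rel, hrow, fun j =>
    (sum_eq_sum_iff_of_le fun j _ => hE.colDeg_le j).1 hcol j (mem_univ j)⟩

end BipartiteRealization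

theorem sum_le_sum_prefix_of_antitone {M : Type*} [AddCommMonoid M] [PartialOrder M]
    [IsOrderedAddMonoid M] {n : ℕ} {w : Fin n → M} (hw : Antitone w) (K : Finset (Fin n)) :
    ∑ i ∈ K, w i ≤ ∑ i : Fin n, if (i : ℕ) < #K then w i else 0 := by
  induction K using Finset.induction_on_max with
  | empty => simp
  | insert a s ha ih =>
    have has : a ∉ s := fun h => lt_irrefl a (ha a h)
    have hsa : #s ≤ a := by simpa using card_le_card (fun x hx => mem_Iio.2 (ha x hx) : s ⊆ Iio a)
    have hsn : #s < n := hsa.trans_lt a.isLt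
    have hprefix : (∑ i : Fin n, if (i : ℕ) < #s + 1 then w i else 0)
        = (∑ i : Fin n, if (i : ℕ) < #s then w i else 0) + w ⟨#s, hsn⟩ := by
      rw [← Fintype.sum_ite_eq' (⟨#s, hsn⟩ : Fin n) w, ← sum_add_distrib]
      refine sum_congr rfl fun i _ => ?_
      simp only [Fin.ext_iff]
      split_ifs <;> first | (exfalso; omega) | simp
    rw [sum_insert has, card_insert_of_notMem has, hprefix, add_comm]
    exact add_le_add ih (hw (Fin.le_def.2 hsa))

namespace PosLex

variable {n : ℕ} {p m : Fin n → ℕ}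

theorem antitone_s11 (h : PosLex n p m) : Antitone fun i => toLex (p i, m i) := by
  cases n with
  | zero => exact fun i => i.elim0
  | succ n =>
    refine Fin.antitone_iff_succ_le.2 fun i => ?_
    obtain ⟨hp, hm⟩ := h i.castSucc i.succ (by simp)
    rw [Prod.Lex.le_iff]
    rcases hp.lt_or_eq with hlt | heq
    exacts [Or.inl hlt, Or.inr ⟨heq, hm heq.symm⟩]

theorem antitone_add_indicator (h : PosLex n p m) (k : ℕ) :
    Antitone fun i => p i + if k ≤ m i then 1 else 0 := by
  intro i j hij
  dsimp only
  rcases Prod.Lex.le_iff.1 (h.antitone_s11 hij) with hlt | ⟨heq, hle⟩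
  · change p j < p i at hlt
    split_ifs <;> omega
  · change p j = p i at heq
    change m j ≤ m i at hle
    split_ifs <;> omega

end PosLex

section FulkersonChen

variable {n : ℕ} {αp αm : Fin n → ℕ}

theorem sum_prefix_le_sum_min (hub : ∀ i, αm i ≤ n - 1) (hsum : (∑ i, αp i) = ∑ i, αm i)
    (hfc : ∀ k : ℕ, 1 ≤ k → k < n →
      (∑ i : Fin n, if (i : ℕ) < k then αp i else 0) ≤
        ∑ i : Fin n, if (i : ℕ) < k then min (αm i) (k - 1) else min (αm i) k)
    {k : ℕ} (hk : 1 ≤ k) (hkn : k ≤ n) :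
    (∑ i : Fin n, if (i : ℕ) < k then αp i + (if k ≤ αm i then 1 else 0) else 0) ≤
      ∑ i, min (αm i) k := by
  rcases hkn.lt_or_eq with hkn | rfl
  · have hl : (∑ i : Fin n, if (i : ℕ) < k then αp i + (if k ≤ αm i then 1 else 0) else 0) =
        (∑ i : Fin n, if (i : ℕ) < k then αp i else 0) +
          ∑ i : Fin n, if (i : ℕ) < k ∧ k ≤ αm i then 1 else 0 := by
      rw [← sum_add_distrib]
      refine sum_congr rfl fun i _ => ?_
      split_ifs <;> omega
    have hr : ∑ i, min (αm i) k =
        (∑ i : Fin n, if (i : ℕ) < k then min (αm i) (k - 1) else min (αm i) k) +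
          ∑ i : Fin n, if (i : ℕ) < k ∧ k ≤ αm i then 1 else 0 := by
      rw [← sum_add_distrib]
      refine sum_congr rfl fun i _ => ?_
      split_ifs <;> omega
    have := hfc k hk hkn
    omega
  · -- for `k = n` the inequality is `hsum`, as every `αm i < n`
    refine le_of_eq (((sum_congr rfl fun i _ => ?_).trans hsum).trans
      (sum_congr rfl fun i _ => (min_eq_left ((hub i).trans (Nat.sub_le k 1))).symm))
    have := hub i
    rw [if_pos i.isLt, if_neg (by omega), add_zero]

theorem sum_le_sum_min_card_filter_ne (hlex : PosLex n αp αm) (hub : ∀ i, αm i ≤ n - 1)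
    (hsum : (∑ i, αp i) = ∑ i, αm i)
    (hfc : ∀ k : ℕ, 1 ≤ k → k < n →
      (∑ i : Fin n, if (i : ℕ) < k then αp i else 0) ≤
        ∑ i : Fin n, if (i : ℕ) < k then min (αm i) (k - 1) else min (αm i) k)
    (K : Finset (Fin n)) :
    ∑ i ∈ K, αp i ≤ ∑ j, min (αm j) #{i ∈ K | i ≠ j} := by
  rcases K.eq_empty_or_nonempty with rfl | hK
  · simp
  have hk : 1 ≤ #K := card_pos.2 hK
  have hprefix := (sum_le_sum_prefix_of_antitone (hlex.antitone_add_indicator #K) K).trans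
    (sum_prefix_le_sum_min hub hsum hfc hk (by simpa using card_le_univ K))
  have hcol : ∑ j, min (αm j) #K =
      ∑ j, min (αm j) #{i ∈ K | i ≠ j} + ∑ j ∈ K, if #K ≤ αm j then 1 else 0 := by
    rw [← sum_ite_mem_eq K, ← sum_add_distrib]
    refine sum_congr rfl fun j _ => ?_
    rw [filter_ne']
    by_cases hj : j ∈ K
    · rw [card_erase_of_mem hj, if_pos hj]
      split_ifs <;> omega
    · rw [erase_eq_of_notMem hj, if_neg hj, add_zero]
  rw [sum_add_distrib] at hprefix
  omega

end FulkersonChen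

/-- a sequence in positive lexicographic order with in-degrees at most
`n - 1`, equal degree sums, and the Fulkerson–Chen inequalities for `1 ≤ k < n`,
is realized by some zero-one matrix with zero diagonal. -/
theorem stmt11 (n : ℕ) (αp αm : Fin n → ℕ)
    (hlex : PosLex n αp αm) (hub : ∀ i, αm i ≤ n - 1)
    (hsum : (∑ i, αp i) = ∑ i, αm i)
    (hfc : ∀ k : ℕ, 1 ≤ k → k < n →
      (∑ i : Fin n, if (i : ℕ) < k then αp i else 0) ≤
        ∑ i : Fin n, if (i : ℕ) < k then min (αm i) (k - 1) else min (αm i) k) :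
    ∃ A : Fin n → Fin n → ℕ, ZeroOne n A ∧ ZeroDiag n A ∧
      (∀ i, outdeg n A i = αp i) ∧ (∀ j, indeg n A j = αm j) := by
  obtain ⟨E, hrel, hrow, hcol⟩ := BipartiteRealization.exists_rowDeg_eq_colDeg_eq
    (R := (· ≠ ·)) (sum_le_sum_min_card_filter_ne hlex hub hsum hfc) hsum
  refine ⟨fun i j => if (i, j) ∈ E then 1 else 0,
    fun i j => (ite_eq_or_eq ((i, j) ∈ E) 1 0).symm, fun i => if_neg fun h => hrel _ h rfl,
    fun i => ?_, fun j => ?_⟩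
  · rw [outdeg, ← BipartiteRealization.rowDeg_eq_sum_ite, hrow]
  · rw [indeg, ← BipartiteRealization.colDeg_eq_sum_ite, hcol]
end

section
/- Let G be a threshold digraph on n vertices. If G has at least one arc, then there exists an arc e of G such that the digraph G − e obtained by deleting e is again a threshold digraph. -/
/-!
Delete the arc `(u, v)` that minimises `(outdeg u, indeg v, a_{vu})` lexicographically.
In a digraph without 2-switches, if `a_{ux} = 1` and `a_{yx} = 0` then row `u` dominates row `y`
off `{u, y}`, strictly at `x`, so `outdeg y + 1 + a_{uy} ≤ outdeg u + a_{yu}`; dually for columns.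
An induced 3-cycle created by the deletion contains `v → u` and a vertex `t` with `u → t`, `v ↛ t`,
whence `outdeg v < outdeg u`. A 2-switch created by the deletion has arcs `u → x`, `y → v` with
`y ↛ x`; comparing `(u, v)` with the arcs `(y, v)` and `(u, x)` through the two domination
inequalities forces `y → u`, `v → x`, then `v → u`, then `x → u`, and finally `outdeg x < outdeg u`.
-/

def deleteArc {n : ℕ} (A : Fin n → Fin n → ℕ) (u v : Fin n) : Fin n → Fin n → ℕ :=
  fun i j => if i = u ∧ j = v then 0 else A i j

section ThresholdDigraph

variable {n : ℕ} {A : Fin n → Fin n → ℕ}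

lemma ZeroDiag.ne_of_eq_one (hdiag : ZeroDiag n A) {i j : Fin n} (h : A i j = 1) : i ≠ j := by
  rintro rfl
  simp [hdiag i] at h

lemma not_hasTwoSwitch_transpose (hsw : ¬ HasTwoSwitch n A) :
    ¬ HasTwoSwitch n (fun i j => A j i) := by
  rintro ⟨w, x, y, z, hwx, hwy, hwz, hxy, hxz, hyz, h1, h2, h3, h4⟩
  exact hsw ⟨x, w, z, y, hwx.symm, hxz, hxy, hwz, hwy, hyz.symm, h1, h2, h4, h3⟩

lemma row_le_row_of_not_hasTwoSwitch (h01 : ZeroOne n A) (hdiag : ZeroDiag n A)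
    (hsw : ¬ HasTwoSwitch n A) {u y x k : Fin n} (huy : u ≠ y) (hxy : x ≠ y)
    (hux : A u x = 1) (hyx : A y x = 0) (hku : k ≠ u) (hky : k ≠ y) :
    A y k ≤ A u k := by
  by_contra! hlt
  have hyk : A y k = 1 := by have := h01 y k; omega
  have huk : A u k = 0 := by have := h01 u k; omega
  have hxk : x ≠ k := by rintro rfl; omega
  exact hsw ⟨u, x, y, k, hdiag.ne_of_eq_one hux, huy, hku.symm, hxy, hxk, hky.symm,
    hux, hyk, huk, hyx⟩

lemma outdeg_add_le_of_not_hasTwoSwitch (h01 : ZeroOne n A) (hdiag : ZeroDiag n A)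
    (hsw : ¬ HasTwoSwitch n A) {u y x : Fin n} (huy : u ≠ y) (hxy : x ≠ y)
    (hux : A u x = 1) (hyx : A y x = 0) :
    outdeg n A y + 1 + A u y ≤ outdeg n A u + A y u := by
  have hpoint : ∀ k, A y k + (if k = x then 1 else 0) + (if k = y then A u y else 0) ≤
      A u k + (if k = u then A y u else 0) := by
    intro k
    have hu_ne_x := hdiag.ne_of_eq_one hux
    have hle := row_le_row_of_not_hasTwoSwitch h01 hdiag hsw huy hxy hux hyx (k := k)
    have := hdiag k
    split_ifs <;> subst_vars <;> simp_all
  have hsum := Finset.sum_le_sum fun k (_ : k ∈ Finset.univ) => hpoint k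
  simpa [outdeg, Finset.sum_add_distrib] using hsum

lemma indeg_add_le_of_not_hasTwoSwitch (h01 : ZeroOne n A) (hdiag : ZeroDiag n A)
    (hsw : ¬ HasTwoSwitch n A) {v x y : Fin n} (hvx : v ≠ x) (hyx : y ≠ x)
    (hyv : A y v = 1) (hyx' : A y x = 0) :
    indeg n A x + 1 + A x v ≤ indeg n A v + A v x :=
  outdeg_add_le_of_not_hasTwoSwitch (A := fun i j => A j i) (fun i j => h01 j i) hdiag
    (not_hasTwoSwitch_transpose hsw) hvx hyx hyv hyx'

lemma deleteArc_eq_one {u v i j : Fin n} (h : deleteArc A u v i j = 1) : A i j = 1 := by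
  unfold deleteArc at h
  split_ifs at h
  exact h

lemma deleteArc_eq_zero {u v i j : Fin n} (h : deleteArc A u v i j = 0) :
    (i = u ∧ j = v) ∨ A i j = 0 := by
  unfold deleteArc at h
  split_ifs at h with hij
  · exact Or.inl hij
  · exact Or.inr h

lemma HasTwoSwitch.of_deleteArc {u v : Fin n} (h : HasTwoSwitch n (deleteArc A u v)) :
    HasTwoSwitch n A ∨ ∃ x y : Fin n, x ≠ u ∧ x ≠ v ∧ y ≠ u ∧ y ≠ v ∧ x ≠ y ∧
      A u x = 1 ∧ A y v = 1 ∧ A y x = 0 := by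
  obtain ⟨w, x, y, z, hwx, hwy, hwz, hxy, hxz, hyz, hD1, hD2, hD3, hD4⟩ := h
  have h1 := deleteArc_eq_one hD1
  have h2 := deleteArc_eq_one hD2
  rcases deleteArc_eq_zero hD3 with ⟨rfl, rfl⟩ | h3
  · rcases deleteArc_eq_zero hD4 with ⟨rfl, -⟩ | h4
    · exact absurd rfl hwy
    · exact Or.inr ⟨x, y, hwx.symm, hxz, hwy.symm, hyz, hxy, h1, h2, h4⟩
  rcases deleteArc_eq_zero hD4 with ⟨rfl, rfl⟩ | h4
  · exact Or.inr ⟨z, w, hyz.symm, hxz.symm, hwy, hwx, hwz.symm, h2, h1, h3⟩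
  · exact Or.inl ⟨w, x, y, z, hwx, hwy, hwz, hxy, hxz, hyz, h1, h2, h3, h4⟩

lemma HasInducedC3.of_deleteArc {u v : Fin n} (h : HasInducedC3 n (deleteArc A u v)) :
    HasInducedC3 n A ∨ ∃ t : Fin n, t ≠ v ∧ A u t = 1 ∧ A v u = 1 ∧ A v t = 0 := by
  obtain ⟨x, y, z, hxy, hxz, hyz, hD1, hD2, hD3, hD4, hD5, hD6⟩ := h
  have h1 := deleteArc_eq_one hD1
  have h2 := deleteArc_eq_one hD2
  have h3 := deleteArc_eq_one hD3
  rcases deleteArc_eq_zero hD4 with ⟨rfl, rfl⟩ | h4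
  · rcases deleteArc_eq_zero hD6 with ⟨rfl, -⟩ | h6
    · exact absurd rfl hxy
    · exact Or.inr ⟨z, hxz.symm, h2, h1, h6⟩
  rcases deleteArc_eq_zero hD5 with ⟨rfl, rfl⟩ | h5
  · exact Or.inr ⟨x, hxy, h3, h2, h4⟩
  rcases deleteArc_eq_zero hD6 with ⟨rfl, rfl⟩ | h6
  · exact Or.inr ⟨y, hyz, h1, h3, h5⟩
  · exact Or.inl ⟨x, y, z, hxy, hxz, hyz, h1, h2, h3, h4, h5, h6⟩

def arcKey (A : Fin n → Fin n → ℕ) (p : Fin n × Fin n) : ℕ ×ₗ ℕ ×ₗ ℕ :=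
  toLex (outdeg n A p.1, toLex (indeg n A p.2, A p.2 p.1))

structure IsMinArc (A : Fin n → Fin n → ℕ) (u v : Fin n) : Prop where
  ne : u ≠ v
  arc : A u v = 1
  arcKey_le : ∀ y x : Fin n, y ≠ x → A y x = 1 → arcKey A (u, v) ≤ arcKey A (y, x)

lemma exists_isMinArc (hne : ∃ u v : Fin n, u ≠ v ∧ A u v = 1) :
    ∃ u v : Fin n, IsMinArc A u v := by
  classical
  obtain ⟨u₀, v₀, hne₀, hA₀⟩ := hne
  let arcs := Finset.univ.filter fun p : Fin n × Fin n => p.1 ≠ p.2 ∧ A p.1 p.2 = 1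
  obtain ⟨⟨u, v⟩, huv, hmin⟩ :=
    arcs.exists_min_image (arcKey A) ⟨(u₀, v₀), by simp [arcs, hne₀, hA₀]⟩
  simp only [arcs, Finset.mem_filter, Finset.mem_univ, true_and] at huv hmin
  exact ⟨u, v, huv.1, huv.2, fun y x hyx hA => hmin (y, x) ⟨hyx, hA⟩⟩

lemma IsMinArc.lex {u v y x : Fin n} (h : IsMinArc A u v) (hyx : y ≠ x) (hA : A y x = 1) :
    outdeg n A u < outdeg n A y ∨ outdeg n A u = outdeg n A y ∧
      (indeg n A v < indeg n A x ∨ indeg n A v = indeg n A x ∧ A v u ≤ A x y) := by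
  simpa only [arcKey, Prod.Lex.toLex_le_toLex] using h.arcKey_le y x hyx hA

lemma IsMinArc.not_hasInducedC3_deleteArc (h01 : ZeroOne n A) (hdiag : ZeroDiag n A)
    (hsw : ¬ HasTwoSwitch n A) (hc3 : ¬ HasInducedC3 n A) {u v : Fin n} (h : IsMinArc A u v) :
    ¬ HasInducedC3 n (deleteArc A u v) := by
  intro hC
  rcases hC.of_deleteArc with hC | ⟨t, htv, hAut, hAvu, hAvt⟩
  · exact hc3 hC
  have hdom := outdeg_add_le_of_not_hasTwoSwitch h01 hdiag hsw h.ne htv hAut hAvt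
  have hmin := h.lex h.ne.symm hAvu
  have := h.arc
  omega

lemma IsMinArc.not_hasTwoSwitch_deleteArc (h01 : ZeroOne n A) (hdiag : ZeroDiag n A)
    (hsw : ¬ HasTwoSwitch n A) {u v : Fin n} (h : IsMinArc A u v) :
    ¬ HasTwoSwitch n (deleteArc A u v) := by
  intro hS
  rcases hS.of_deleteArc with hS | ⟨x, y, hxu, hxv, hyu, hyv, hxy, hAux, hAyv, hAyx⟩
  · exact hsw hS
  have hrow := outdeg_add_le_of_not_hasTwoSwitch h01 hdiag hsw hyu.symm hxy hAux hAyx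
  have hmin_yv := h.lex hyv hAyv
  have := h01 u y
  have := h01 y u
  have hAyu : A y u = 1 := by omega
  have hcol := indeg_add_le_of_not_hasTwoSwitch h01 hdiag hsw hxv.symm hxy.symm hAyv hAyx
  have hmin_ux := h.lex hxu.symm hAux
  have := h01 v x
  have := h01 x v
  have hAvx : A v x = 1 := by omega
  have hAxv : A x v = 0 := by omega
  have hAvu : A v u = 1 := by
    rcases h01 v u with hAvu | hAvu
    · exact absurd ⟨y, u, v, x, hyu, hyv, hxy.symm, h.ne, hxu.symm, hxv.symm,
        hAyu, hAvx, hAyx, hAvu⟩ hsw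
    · exact hAvu
  have hAxu : A x u = 1 := by have := h01 x u; omega
  have hrow' := outdeg_add_le_of_not_hasTwoSwitch h01 hdiag hsw hxu.symm hxv.symm h.arc hAxv
  have hmin_xu := h.lex hxu hAxu
  omega

end ThresholdDigraph

/-- Corollary 4, first part: a nonempty threshold digraph has an arc
whose deletion leaves a threshold digraph. -/
theorem stmt12 (n : ℕ) (A : Fin n → Fin n → ℕ)
    (h01 : ZeroOne n A) (hdiag : ZeroDiag n A)
    (hsw : ¬ HasTwoSwitch n A) (hc3 : ¬ HasInducedC3 n A)
    (hne : ∃ u v : Fin n, u ≠ v ∧ A u v = 1) :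
    ∃ u v : Fin n, u ≠ v ∧ A u v = 1 ∧
      ¬ HasTwoSwitch n (fun i j => if i = u ∧ j = v then 0 else A i j) ∧
      ¬ HasInducedC3 n (fun i j => if i = u ∧ j = v then 0 else A i j) := by
  obtain ⟨u, v, h⟩ := exists_isMinArc hne
  exact ⟨u, v, h.ne, h.arc, h.not_hasTwoSwitch_deleteArc h01 hdiag hsw,
    h.not_hasInducedC3_deleteArc h01 hdiag hsw hc3⟩
end

section
/- Let G be a threshold digraph on n vertices. If G is not complete (i.e., some ordered pair (u,v) with u ≠ v is not an arc of G), then there exists an ordered pair e = (u,v) with u ≠ v that is not an arc of G such that the digraph G + e obtained by adding the arc e is again a threshold digraph. -/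
/-!
Add a non-arc `(u, v)` that is lexicographically maximal for `(d⁺ u, d⁻ v, a_{vu})`.
Without 2-switches, an arc `y → z` together with a non-arc `u ↛ z` forces the out-neighbourhood
of `u` into that of `y` (up to `y` and `z`), so `d⁺ u + a_{yu} < d⁺ y + a_{uy}`; transposing gives
the dual inequality for in-degrees. A new 2-switch or induced 3-cycle through `(u, v)` would,
through these inequalities, contradict the maximality of `(u, v)` or produce a 2-switch of `G`.
-/

open Finset Function

/-- The digraph `G + (u, v)`. -/
def addArc (n : ℕ) (A : Fin n → Fin n → ℕ) (u v : Fin n) : Fin n → Fin n → ℕ :=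
  fun i j => if i = u ∧ j = v then 1 else A i j

section

variable {n : ℕ} {A : Fin n → Fin n → ℕ}

lemma addArc_eq_zero_iff {u v i j : Fin n} :
    addArc n A u v i j = 0 ↔ A i j = 0 ∧ ¬(i = u ∧ j = v) := by
  unfold addArc; split_ifs with h <;> simp [h]

lemma addArc_eq_one_iff {u v i j : Fin n} :
    addArc n A u v i j = 1 ↔ (i = u ∧ j = v) ∨ A i j = 1 := by
  unfold addArc; split_ifs with h <;> simp [h]

lemma ZeroOne.swap (h01 : ZeroOne n A) : ZeroOne n (swap A) := fun i j => h01 j i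

lemma ZeroDiag.swap (hdiag : ZeroDiag n A) : ZeroDiag n (swap A) := hdiag

lemma not_hasTwoSwitch_swap (hsw : ¬ HasTwoSwitch n A) : ¬ HasTwoSwitch n (swap A) := by
  rintro ⟨w, x, y, z, hwx, hwy, hwz, hxy, hxz, hyz, h1, h2, h3, h4⟩
  exact hsw ⟨x, w, z, y, hwx.symm, hxz, hxy, hwz, hwy, hyz.symm, h1, h2, h4, h3⟩

lemma outdeg_add_lt_of_not_hasTwoSwitch (h01 : ZeroOne n A) (hdiag : ZeroDiag n A)
    (hsw : ¬ HasTwoSwitch n A) {u y z : Fin n} (huy : u ≠ y) (huz : u ≠ z) (hyz : y ≠ z)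
    (hAyz : A y z = 1) (hAuz : A u z = 0) :
    outdeg n A u + A y u < outdeg n A y + A u y := by
  have hdom : ∀ j, j ≠ u → j ≠ y → j ≠ z → A u j ≤ A y j := by
    intro j hju hjy hjz
    rcases h01 u j with h | h
    · omega
    rcases h01 y j with h' | h'
    · exact (hsw ⟨u, j, y, z, hju.symm, huy, huz, hjy, hjz, hyz, h, hAyz, hAuz, h'⟩).elim
    · omega
  have hpt : ∀ j, A u j + (if j = u then A y u else 0) + (if j = z then 1 else 0) ≤
      A y j + (if j = y then A u y else 0) := by
    intro j
    rcases eq_or_ne j u with rfl | hju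
    · simp [hdiag j, huy, huz]
    rcases eq_or_ne j y with rfl | hjy
    · simp [hdiag j, hyz, hju]
    rcases eq_or_ne j z with rfl | hjz
    · simp [hAuz, hAyz, hju, hjy]
    · simpa [hju, hjy, hjz] using hdom j hju hjy hjz
  calc outdeg n A u + A y u < outdeg n A u + A y u + 1 := by omega
    _ = ∑ j, (A u j + (if j = u then A y u else 0) + (if j = z then 1 else 0)) := by
      simp [outdeg, sum_add_distrib]
    _ ≤ ∑ j, (A y j + (if j = y then A u y else 0)) := sum_le_sum fun j _ => hpt j
    _ = outdeg n A y + A u y := by simp [outdeg, sum_add_distrib]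

lemma indeg_add_lt_of_not_hasTwoSwitch (h01 : ZeroOne n A) (hdiag : ZeroDiag n A)
    (hsw : ¬ HasTwoSwitch n A) {v y z : Fin n} (hvy : v ≠ y) (hvz : v ≠ z) (hyz : y ≠ z)
    (hAyz : A y z = 1) (hAyv : A y v = 0) :
    indeg n A v + A v z < indeg n A z + A z v :=
  outdeg_add_lt_of_not_hasTwoSwitch h01.swap hdiag.swap (not_hasTwoSwitch_swap hsw)
    hvz hvy hyz.symm hAyz hAyv

/-- `(u, v)` is a non-arc maximising `(outdeg u, indeg v, A v u)` lexicographically. -/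
structure IsMaxNonArc (n : ℕ) (A : Fin n → Fin n → ℕ) (u v : Fin n) : Prop where
  ne : u ≠ v
  eq_zero : A u v = 0
  outdeg_le : ∀ p q, p ≠ q → A p q = 0 → outdeg n A p ≤ outdeg n A u
  indeg_le : ∀ q, u ≠ q → A u q = 0 → indeg n A q ≤ indeg n A v
  tie_le : ∀ q, u ≠ q → A u q = 0 → indeg n A q = indeg n A v → A q u ≤ A v u

lemma exists_isMaxNonArc (hnc : ∃ u v : Fin n, u ≠ v ∧ A u v = 0) :
    ∃ u v, IsMaxNonArc n A u v := by
  classical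
  obtain ⟨u₀, v₀, huv₀, hA₀⟩ := hnc
  obtain ⟨⟨u, v⟩, hmem, hmax⟩ := exists_max_image
    (univ.filter fun p : Fin n × Fin n => p.1 ≠ p.2 ∧ A p.1 p.2 = 0)
    (fun p => toLex (outdeg n A p.1, toLex (indeg n A p.2, A p.2 p.1)))
    ⟨(u₀, v₀), by simp [huv₀, hA₀]⟩
  simp only [mem_filter, mem_univ, true_and] at hmem
  have hle : ∀ p q, p ≠ q → A p q = 0 →
      outdeg n A p < outdeg n A u ∨ outdeg n A p = outdeg n A u ∧
        (indeg n A q < indeg n A v ∨ indeg n A q = indeg n A v ∧ A q p ≤ A v u) := by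
    intro p q hpq hApq
    simpa [Prod.Lex.toLex_le_toLex] using hmax (p, q) (by simp [hpq, hApq])
  refine ⟨u, v, hmem.1, hmem.2, fun p q hpq hApq => ?_, fun q huq hAuq => ?_,
    fun q huq hAuq hq => ?_⟩
  · have := hle p q hpq hApq; omega
  · have := hle u q huq hAuq; omega
  · have := hle u q huq hAuq; omega

end

namespace IsMaxNonArc

variable {n : ℕ} {A : Fin n → Fin n → ℕ} {u v : Fin n}

lemma eq_zero_and_eq_one_of_arc_of_nonarc (hm : IsMaxNonArc n A u v) (h01 : ZeroOne n A) (hdiag : ZeroDiag n A)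
    (hsw : ¬ HasTwoSwitch n A) {y q z : Fin n} (hyq : y ≠ q) (hAyq : A y q = 0)
    (huy : u ≠ y) (huz : u ≠ z) (hyz : y ≠ z) (hAyz : A y z = 1) (hAuz : A u z = 0) :
    A y u = 0 ∧ A u y = 1 := by
  have hlt := outdeg_add_lt_of_not_hasTwoSwitch h01 hdiag hsw huy huz hyz hAyz hAuz
  have hle := hm.outdeg_le y q hyq hAyq
  rcases h01 y u with h | h <;> rcases h01 u y with h' | h' <;> omega

lemma false_of_switch (hm : IsMaxNonArc n A u v) (h01 : ZeroOne n A) (hdiag : ZeroDiag n A)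
    (hsw : ¬ HasTwoSwitch n A) {y z : Fin n} (hyu : y ≠ u) (hyv : y ≠ v) (hzu : z ≠ u)
    (hzv : z ≠ v) (hyz : y ≠ z) (hAyz : A y z = 1) (hAuz : A u z = 0) (hAyv : A y v = 0) :
    False := by
  obtain ⟨hAyu, -⟩ := hm.eq_zero_and_eq_one_of_arc_of_nonarc h01 hdiag hsw hyv hAyv hyu.symm hzu.symm hyz hAyz hAuz
  have hcol := indeg_add_lt_of_not_hasTwoSwitch h01 hdiag hsw hyv.symm hzv.symm hyz hAyz hAyv
  have hind := hm.indeg_le z hzu.symm hAuz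
  have htie := hm.tie_le z hzu.symm hAuz
  have hAzv : A z v = 1 := by rcases h01 z v with h | h <;> omega
  have hAvz : A v z = 0 := by rcases h01 v z with h | h <;> omega
  rcases h01 v u with hAvu | hAvu
  · -- `A z u = 0` by the tie-break, and then `z` out-dominates `u`
    have hAzu : A z u = 0 := by rcases h01 z u with h | h <;> omega
    have := (hm.eq_zero_and_eq_one_of_arc_of_nonarc h01 hdiag hsw hzu hAzu hzu.symm hm.ne hzv hAzv hm.eq_zero).2
    omega
  · exact hsw ⟨v, u, y, z, hm.ne.symm, hyv.symm, hzv.symm, hyu.symm, hzu.symm, hyz, hAvu, hAyz,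
      hAvz, hAyu⟩

lemma not_hasTwoSwitch_addArc (hm : IsMaxNonArc n A u v) (h01 : ZeroOne n A)
    (hdiag : ZeroDiag n A) (hsw : ¬ HasTwoSwitch n A) : ¬ HasTwoSwitch n (addArc n A u v) := by
  rintro ⟨w, x, y, z, hwx, hwy, hwz, hxy, hxz, hyz, h1, h2, h3, h4⟩
  rw [addArc_eq_one_iff] at h1 h2
  rw [addArc_eq_zero_iff] at h3 h4
  rcases h1 with ⟨rfl, rfl⟩ | h1
  · rcases h2 with ⟨rfl, -⟩ | h2
    · exact hwy rfl
    exact hm.false_of_switch h01 hdiag hsw hwy.symm hxy.symm hwz.symm hxz.symm hyz h2 h3.1 h4.1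
  rcases h2 with ⟨rfl, rfl⟩ | h2
  · exact hm.false_of_switch h01 hdiag hsw hwy hwz hxy hxz hwx h1 h4.1 h3.1
  exact hsw ⟨w, x, y, z, hwx, hwy, hwz, hxy, hxz, hyz, h1, h2, h3.1, h4.1⟩

lemma not_hasInducedC3_addArc (hm : IsMaxNonArc n A u v) (h01 : ZeroOne n A)
    (hdiag : ZeroDiag n A) (hsw : ¬ HasTwoSwitch n A) (hc3 : ¬ HasInducedC3 n A) :
    ¬ HasInducedC3 n (addArc n A u v) := by
  have hnew : ∀ w, u ≠ w → v ≠ w → A v w = 1 → A u w = 0 → A v u = 0 → False :=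
    fun w huw hvw hAvw hAuw hAvu => by
      have := (hm.eq_zero_and_eq_one_of_arc_of_nonarc h01 hdiag hsw hm.ne.symm hAvu hm.ne huw hvw hAvw hAuw).2
      exact absurd hm.eq_zero (by omega)
  rintro ⟨x, y, z, hxy, hxz, hyz, h1, h2, h3, h4, h5, h6⟩
  rw [addArc_eq_one_iff] at h1 h2 h3
  rw [addArc_eq_zero_iff] at h4 h5 h6
  rcases h1 with ⟨rfl, rfl⟩ | h1
  · exact hnew z hxz hyz (h2.resolve_left fun h => hxy h.1.symm) h6.1 h4.1
  rcases h2 with ⟨rfl, rfl⟩ | h2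
  · exact hnew x hxy.symm hxz.symm (h3.resolve_left fun h => hxz h.2) h4.1 h5.1
  rcases h3 with ⟨rfl, rfl⟩ | h3
  · exact hnew y hyz.symm hxy h1 h5.1 h6.1
  exact hc3 ⟨x, y, z, hxy, hxz, hyz, h1, h2, h3, h4.1, h5.1, h6.1⟩

end IsMaxNonArc

/-- Corollary 4, second part: a non-complete threshold digraph has a
non-arc whose addition leaves a threshold digraph. -/
theorem stmt13 (n : ℕ) (A : Fin n → Fin n → ℕ)
    (h01 : ZeroOne n A) (hdiag : ZeroDiag n A)
    (hsw : ¬ HasTwoSwitch n A) (hc3 : ¬ HasInducedC3 n A)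
    (hnc : ∃ u v : Fin n, u ≠ v ∧ A u v = 0) :
    ∃ u v : Fin n, u ≠ v ∧ A u v = 0 ∧
      ¬ HasTwoSwitch n (fun i j => if i = u ∧ j = v then 1 else A i j) ∧
      ¬ HasInducedC3 n (fun i j => if i = u ∧ j = v then 1 else A i j) := by
  obtain ⟨u, v, hm⟩ := exists_isMaxNonArc hnc
  exact ⟨u, v, hm.ne, hm.eq_zero, hm.not_hasTwoSwitch_addArc h01 hdiag hsw,
    hm.not_hasInducedC3_addArc h01 hdiag hsw hc3⟩
end

section
/- Let α = ((α_1^+,α_1^-),…,(α_n^+,α_n^-)) be a sequence of pairs of nonnegative integers with α_i^- ≤ n − 1 for all i, satisfying only α_i^+ ≥ α_{i+1}^+ for every 1 ≤ i < n (nonincreasing in the first component, with no condition on the second component). If Σ_{i=1}^n α_i^+ = Σ_{i=1}^n α_i^- and for every k with 1 ≤ k < n, Σ_{i=1}^k min(α_i^-, k−1) + Σ_{i=k+1}^n min(α_i^-, k) ≥ Σ_{i=1}^k α_i^+, then α is digraphical, i.e., there exists a loopless digraph on vertices v_1,…,v_n in which v_i has out-degree α_i^+ and in-degree α_i^-. 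-/
open Finset

/-!
Out-degrees `r` and in-degrees `c` with equal sums are realized by a loopless digraph as soon as
Fulkerson's inequality `∑_{v ∈ S} r v ≤ ∑_w min (c w) #(S \ {w})` holds for every vertex set `S`.
This is max-flow/min-cut: a partial realization of maximum size admits no augmenting alternating
path, and the tails reachable by alternating paths from an unsaturated tail form a set `S`
violating the inequality.

The inequality for an arbitrary `S` with `#S = k` follows from the hypotheses on initial segments.
Let `β` be the `k`-th largest out-degree. Since `r` is nonincreasing, `P = {β < r}` and
`Q = {β ≤ r}` are initial segments with `#P < k ≤ #Q`. For `#P ≤ m ≤ #Q`, the best `m`-set is `P`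
filled up from `Q \ P`, preferring vertices with `c ≥ m`. The slack of the inequality for that set,
as a function of `m`, has increments that drop by at most one. Hence its value at `k` is at least
its smaller value at the endpoints `#P` and `#Q`, and the inequality holds at both endpoints by
hypothesis.
-/

namespace DigraphRealization

section AltPath

variable {V : Type*} {E : Finset (V × V)}

/-- Alternating paths live on `V ⊕ V`, with `inl v` standing for `v` as a tail and `inr w` for
`w` as a head: a tail steps to a head along an admissible arc missing from `E`, a head steps back
along an arc of `E`. -/
def AltStep (E : Finset (V × V)) : V ⊕ V → V ⊕ V → Prop
  | .inl v, .inr w => (v, w) ∉ E ∧ v ≠ w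
  | .inr w, .inl v => (v, w) ∈ E
  | _, _ => False

def AltPath (E : Finset (V × V)) : ℕ → V ⊕ V → V ⊕ V → Prop
  | 0, a, b => a = b
  | k + 1, a, b => ∃ c, AltStep E a c ∧ AltPath E k c b

lemma AltPath.snoc {k : ℕ} {a b d : V ⊕ V} (h : AltPath E k a b) (hbd : AltStep E b d) :
    AltPath E (k + 1) a d := by
  induction k generalizing a with
  | zero => cases h; exact ⟨d, hbd, rfl⟩
  | succ k ih =>
    obtain ⟨c, hac, hc⟩ := h
    exact ⟨c, hac, ih hc⟩

lemma AltPath.of_agree {E' : Finset (V × V)} {w₁ : V}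
    (hagree : ∀ a b, b ≠ w₁ → ((a, b) ∈ E' ↔ (a, b) ∈ E)) {k : ℕ} {a b : V ⊕ V}
    (h : AltPath E k a b) : AltPath E' k a b ∨ ∃ m ≤ k, AltPath E m (.inr w₁) b := by
  induction k generalizing a with
  | zero => exact .inl h
  | succ k ih =>
    obtain ⟨c, hac, hc⟩ := h
    by_cases ha : a = .inr w₁
    · exact .inr ⟨k + 1, le_rfl, ha ▸ ⟨c, hac, hc⟩⟩
    by_cases hc₁ : c = .inr w₁
    · exact .inr ⟨k, k.le_succ, hc₁ ▸ hc⟩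
    rcases ih hc with h' | ⟨m, hm, h'⟩
    · refine .inl ⟨c, ?_, h'⟩
      match a, c, hac with
      | .inl x, .inr y, hac =>
        exact ⟨fun h => hac.1 ((hagree x y fun e => hc₁ (e ▸ rfl)).mp h), hac.2⟩
      | .inr y, .inl x, hac =>
        exact (hagree x y fun e => ha (e ▸ rfl)).mpr hac
    · exact .inr ⟨m, hm.trans k.le_succ, h'⟩

end AltPath

section Realization

variable {V : Type*} [DecidableEq V]

def moveTail (E : Finset (V × V)) (u v w : V) : Finset (V × V) :=
  insert (v, w) (E.erase (u, w))

lemma card_moveTail {E : Finset (V × V)} {u v w : V} (hu : (u, w) ∈ E) (hv : (v, w) ∉ E) :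
    #(moveTail E u v w) = #E := by
  have : 0 < #E := card_pos.mpr ⟨_, hu⟩
  rw [moveTail, card_insert_of_notMem (fun h => hv (mem_of_mem_erase h)), card_erase_of_mem hu]
  omega

lemma mem_moveTail_of_ne {E : Finset (V × V)} {u v w a b : V} (hb : b ≠ w) :
    (a, b) ∈ moveTail E u v w ↔ (a, b) ∈ E := by
  simp [moveTail, hb]

variable [Fintype V]

def FulkersonIneq (r c : V → ℕ) (S : Finset V) : Prop :=
  ∑ v ∈ S, r v ≤ ∑ w, min (c w) #(S.erase w)

def outDeg (E : Finset (V × V)) (v : V) : ℕ := ∑ w, if (v, w) ∈ E then 1 else 0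

def inDeg (E : Finset (V × V)) (w : V) : ℕ := ∑ v, if (v, w) ∈ E then 1 else 0

lemma sum_outDeg (E : Finset (V × V)) : ∑ v, outDeg E v = #E := by
  unfold outDeg
  rw [← Fintype.sum_prod_type' fun v w => (if (v, w) ∈ E then 1 else 0 : ℕ)]
  simp

lemma sum_inDeg (E : Finset (V × V)) : ∑ w, inDeg E w = #E := by
  rw [← sum_outDeg E]
  exact Finset.sum_comm

lemma ite_mem_insert {α : Type*} [DecidableEq α] {s : Finset α} {a : α} (ha : a ∉ s) (x : α) :
    (if x ∈ insert a s then 1 else 0) = (if x ∈ s then 1 else 0) + if a = x then 1 else 0 := by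
  by_cases hx : a = x
  · subst hx; simp [ha]
  · simp [Ne.symm hx, hx]

lemma outDeg_insert {E : Finset (V × V)} {e : V × V} (he : e ∉ E) (v : V) :
    outDeg (insert e E) v = outDeg E v + if e.1 = v then 1 else 0 := by
  simp only [outDeg, ite_mem_insert he, sum_add_distrib, Prod.ext_iff]
  by_cases hv : e.1 = v <;> simp [hv]

lemma inDeg_insert {E : Finset (V × V)} {e : V × V} (he : e ∉ E) (w : V) :
    inDeg (insert e E) w = inDeg E w + if e.2 = w then 1 else 0 := by
  simp only [inDeg, ite_mem_insert he, sum_add_distrib, Prod.ext_iff]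
  by_cases hw : e.2 = w <;> simp [hw]

structure IsPartialRealization (r c : V → ℕ) (E : Finset (V × V)) : Prop where
  loopless : ∀ e ∈ E, e.1 ≠ e.2
  outDeg_le : ∀ v, outDeg E v ≤ r v
  inDeg_le : ∀ w, inDeg E w ≤ c w

variable {r c : V → ℕ} {E : Finset (V × V)}

lemma isPartialRealization_empty : IsPartialRealization r c (∅ : Finset (V × V)) :=
  ⟨by simp, by simp [outDeg], by simp [inDeg]⟩

lemma IsPartialRealization.insert (hE : IsPartialRealization r c E) {v w : V}
    (hvw : (v, w) ∉ E) (hne : v ≠ w) (hv : outDeg E v < r v) (hw : inDeg E w < c w) :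
    IsPartialRealization r c (insert (v, w) E) where
  loopless e he := by
    rcases mem_insert.mp he with rfl | he
    exacts [hne, hE.loopless e he]
  outDeg_le x := by
    have := hE.outDeg_le x
    rw [outDeg_insert hvw]
    split_ifs with h
    · obtain rfl : v = x := h; omega
    · omega
  inDeg_le x := by
    have := hE.inDeg_le x
    rw [inDeg_insert hvw]
    split_ifs with h
    · obtain rfl : w = x := h; omega
    · omega

lemma outDeg_moveTail {u v w : V} (hu : (u, w) ∈ E) (hv : (v, w) ∉ E) (x : V) :
    outDeg (moveTail E u v w) x + (if u = x then 1 else 0) =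
      outDeg E x + if v = x then 1 else 0 := by
  have herase := outDeg_insert (notMem_erase (u, w) E) x
  rw [insert_erase hu] at herase
  rw [moveTail, outDeg_insert (fun h => hv (mem_of_mem_erase h)), herase]
  dsimp only
  omega

lemma inDeg_moveTail {u v w : V} (hu : (u, w) ∈ E) (hv : (v, w) ∉ E) :
    inDeg (moveTail E u v w) = inDeg E := by
  funext x
  have herase := inDeg_insert (notMem_erase (u, w) E) x
  rw [insert_erase hu] at herase
  rw [moveTail, inDeg_insert (fun h => hv (mem_of_mem_erase h)), herase]

lemma IsPartialRealization.moveTail (hE : IsPartialRealization r c E) {u v w : V}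
    (hu : (u, w) ∈ E) (hv : (v, w) ∉ E) (hne : v ≠ w) (hdef : outDeg E v < r v) :
    IsPartialRealization r c (moveTail E u v w) where
  loopless e he := by
    rcases mem_insert.mp he with rfl | he
    exacts [hne, hE.loopless e (mem_of_mem_erase he)]
  outDeg_le x := by
    have := outDeg_moveTail hu hv x
    have := hE.outDeg_le x
    split_ifs at * with h₁ h₂ <;> subst_vars <;> omega
  inDeg_le x := by
    rw [inDeg_moveTail hu hv]
    exact hE.inDeg_le x

lemma exists_card_succ_of_altPath (hE : IsPartialRealization r c E)
    {k : ℕ} {v w : V} (hv : outDeg E v < r v) (hw : inDeg E w < c w)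
    (h : AltPath E k (.inl v) (.inr w)) :
    ∃ E', IsPartialRealization r c E' ∧ #E' = #E + 1 := by
  induction k using Nat.strong_induction_on generalizing E v w with
  | _ k ih =>
  by_cases hshorter : ∃ k' < k, ∃ v' w', outDeg E v' < r v' ∧ inDeg E w' < c w' ∧
      AltPath E k' (.inl v') (.inr w')
  · obtain ⟨k', hk', v', w', hv', hw', h'⟩ := hshorter
    exact ih k' hk' hE hv' hw' h'
  -- On a shortest augmenting path `v → w₁ → v₁ → ⋯ → w`, moving the tail of the arc `(v₁, w₁)`
  -- to `v` leaves `v₁` unsaturated, with a path to `w` that is two steps shorter.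
  rcases k with _ | k
  · exact absurd h Sum.inl_ne_inr
  obtain ⟨_ | w₁, hstep, hpath⟩ := h
  · exact hstep.elim
  obtain ⟨hvw₁, hne⟩ := hstep
  rcases k with _ | k
  · obtain rfl : w₁ = w := Sum.inr_injective hpath
    exact ⟨_, hE.insert hvw₁ hne hv hw, card_insert_of_notMem hvw₁⟩
  obtain ⟨v₁ | _, hv₁w₁, hpath⟩ := hpath
  swap
  · exact hv₁w₁.elim
  change (v₁, w₁) ∈ E at hv₁w₁
  have hvv₁ : v ≠ v₁ := by rintro rfl; exact hvw₁ hv₁w₁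
  have hE₁ := hE.moveTail hv₁w₁ hvw₁ hne hv
  have hv₁ : outDeg (moveTail E v₁ v w₁) v₁ < r v₁ := by
    have hdeg := outDeg_moveTail hv₁w₁ hvw₁ v₁
    rw [if_pos rfl, if_neg hvv₁] at hdeg
    have := hE.outDeg_le v₁
    omega
  have hw' : inDeg (moveTail E v₁ v w₁) w < c w := by rwa [inDeg_moveTail hv₁w₁ hvw₁]
  rcases hpath.of_agree (fun a b hb => mem_moveTail_of_ne hb) with hpath₁ | ⟨m, hm, hsuffix⟩
  · obtain ⟨E', hE', hcard⟩ := ih k (by omega) hE₁ hv₁ hw' hpath₁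
    exact ⟨E', hE', by rw [hcard, card_moveTail hv₁w₁ hvw₁]⟩
  · exact (hshorter ⟨m + 1, by omega, v, w, hv, hw, .inr w₁, ⟨hvw₁, hne⟩, hsuffix⟩).elim

lemma sum_min_card_erase_le_sum_outDeg {X Y : Finset V}
    (hXY : ∀ v ∈ X, ∀ w, (v, w) ∉ E → v ≠ w → w ∈ Y)
    (hYX : ∀ w ∈ Y, ∀ v, (v, w) ∈ E → v ∈ X) (hY : ∀ w ∈ Y, c w ≤ inDeg E w) :
    ∑ w, min (c w) #(X.erase w) ≤ ∑ v ∈ X, outDeg E v := by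
  rw [show ∑ v ∈ X, outDeg E v = ∑ w, ∑ v ∈ X, if (v, w) ∈ E then 1 else 0 from sum_comm]
  refine sum_le_sum fun w _ => ?_
  by_cases hw : w ∈ Y
  · calc min (c w) #(X.erase w) ≤ inDeg E w := (min_le_left _ _).trans (hY w hw)
      _ = ∑ v ∈ X, if (v, w) ∈ E then 1 else 0 := by
        refine (sum_subset (subset_univ X) fun v _ hv => ?_).symm
        rw [if_neg fun h => hv (hYX w hw v h)]
  · calc min (c w) #(X.erase w) ≤ #(X.erase w) := min_le_right _ _
      _ = ∑ v ∈ X.erase w, if (v, w) ∈ E then 1 else 0 := by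
        rw [card_eq_sum_ones]
        refine sum_congr rfl fun v hv => (if_pos ?_).symm
        by_contra h
        exact hw (hXY v (mem_of_mem_erase hv) w h (ne_of_mem_erase hv))
      _ ≤ ∑ v ∈ X, if (v, w) ∈ E then 1 else 0 := sum_le_sum_of_subset (erase_subset w X)

lemma outDeg_eq_of_maximal (hE : IsPartialRealization r c E)
    (hmax : ∀ E', IsPartialRealization r c E' → #E' ≤ #E)
    (hF : ∀ S, FulkersonIneq r c S) (v : V) :
    outDeg E v = r v := by
  classical
  by_contra hne
  have hv : outDeg E v < r v := (hE.outDeg_le v).lt_of_ne hne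
  let Reachable (a : V ⊕ V) : Prop := ∃ v', outDeg E v' < r v' ∧ ∃ k, AltPath E k (.inl v') a
  let X : Finset V := {x | Reachable (.inl x)}
  let Y : Finset V := {y | Reachable (.inr y)}
  have hvX : v ∈ X := by simp only [X, mem_filter, mem_univ, true_and]; exact ⟨v, hv, 0, rfl⟩
  have hcut : ∑ w, min (c w) #(X.erase w) ≤ ∑ x ∈ X, outDeg E x := by
    refine sum_min_card_erase_le_sum_outDeg (E := E) (Y := Y) ?_ ?_ ?_
    · simp only [X, Y, mem_filter, mem_univ, true_and]
      rintro x ⟨v', hv', k, hk⟩ w hxw hne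
      exact ⟨v', hv', k + 1, hk.snoc ⟨hxw, hne⟩⟩
    · simp only [X, Y, mem_filter, mem_univ, true_and]
      rintro w ⟨v', hv', k, hk⟩ x hxw
      exact ⟨v', hv', k + 1, hk.snoc hxw⟩
    · simp only [Y, mem_filter, mem_univ, true_and]
      rintro w ⟨v', hv', k, hk⟩
      by_contra! hw
      obtain ⟨E', hE', hcard⟩ := exists_card_succ_of_altPath hE hv' hw hk
      have := hmax E' hE'
      omega
  have hdef : ∑ x ∈ X, outDeg E x < ∑ x ∈ X, r x :=
    sum_lt_sum (fun x _ => hE.outDeg_le x) ⟨v, hvX, hv⟩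
  exact absurd (le_trans (hF X) hcut) (not_le.mpr hdef)

theorem exists_realization (hsum : ∑ v, r v = ∑ w, c w)
    (hF : ∀ S, FulkersonIneq r c S) :
    ∃ E : Finset (V × V), (∀ e ∈ E, e.1 ≠ e.2) ∧ (∀ v, outDeg E v = r v) ∧
      ∀ w, inDeg E w = c w := by
  classical
  obtain ⟨E, hE, hmax⟩ := exists_max_image {E | IsPartialRealization r c E} card
    ⟨∅, by simpa using isPartialRealization_empty⟩
  simp only [mem_filter, mem_univ, true_and] at hE hmax
  have hout := outDeg_eq_of_maximal hE hmax hF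
  have hin : ∑ w, inDeg E w = ∑ w, c w := by
    rw [sum_inDeg, ← sum_outDeg, ← hsum]
    exact sum_congr rfl fun v _ => hout v
  exact ⟨E, hE.loopless, hout,
    fun w => (sum_eq_sum_iff_of_le fun w _ => hE.inDeg_le w).mp hin w (mem_univ w)⟩

end Realization

lemma sum_le_sum_add_min {α : Type*} [DecidableEq α] {g : α → ℤ} {S P Z : Finset α}
    (hP : ∀ x ∈ P, 1 ≤ g x) (hZ : ∀ x ∉ P, g x ≤ if x ∈ Z then 1 else 0) :
    ∑ x ∈ S, g x ≤ ∑ x ∈ P, g x + min ((#S : ℤ) - #P) #Z := by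
  have hSP : ∑ x ∈ S \ P, g x ≤ #(S \ P ∩ Z) := by
    calc ∑ x ∈ S \ P, g x ≤ ∑ x ∈ S \ P, if x ∈ Z then 1 else 0 :=
          sum_le_sum fun x hx => hZ x (mem_sdiff.mp hx).2
      _ = #(S \ P ∩ Z) := by rw [sum_boole, filter_mem_eq_inter]
  have hPS : (#(P \ S) : ℤ) ≤ ∑ x ∈ P \ S, g x := by
    rw [card_eq_sum_ones]
    push_cast
    exact sum_le_sum fun x hx => hP x (mem_sdiff.mp hx).1
  have hmin : (#(S \ P ∩ Z) : ℤ) - #(P \ S) ≤ min ((#S : ℤ) - #P) #Z := by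
    have hScard := card_inter_add_card_sdiff S P
    have hPcard := card_inter_add_card_sdiff P S
    rw [inter_comm] at hPcard
    have := card_le_card (inter_subset_left (s₁ := S \ P) (s₂ := Z))
    have := card_le_card (inter_subset_right (s₁ := S \ P) (s₂ := Z))
    exact le_min (by omega) (by omega)
  have hSsplit := sum_inter_add_sum_sdiff S P g
  have hPsplit := sum_inter_add_sum_sdiff P S g
  rw [inter_comm] at hPsplit
  linear_combination hSP + hPS + hmin - hSsplit + hPsplit

lemma min_le_of_increment_drop_le_one {F : ℕ → ℤ} {p k q : ℕ} (hpk : p ≤ k) (hkq : k ≤ q)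
    (hF : ∀ m m', p ≤ m → m < m' → F (m' + 1) - F m' ≤ F (m + 1) - F m + 1) :
    min (F p) (F q) ≤ F k := by
  by_cases hdrop : ∃ m, p ≤ m ∧ m < k ∧ F (m + 1) < F m
  · obtain ⟨m, hpm, hmk, hlt⟩ := hdrop
    have hanti : AntitoneOn F (Set.Ici k) := antitoneOn_nat_Ici_of_succ_le fun m' hm' => by
      have := hF m m' hpm (by omega)
      omega
    exact min_le_of_right_le (hanti Set.self_mem_Ici hkq hkq)
  · simp only [not_exists, not_and, not_lt] at hdrop
    have hmono : MonotoneOn F (Set.Icc p k) :=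
      monotoneOn_of_le_succ Set.ordConnected_Icc fun m _ hm hm' => by
        rw [Order.succ_eq_add_one] at hm' ⊢
        exact hdrop m hm.1 hm'.2
    exact min_le_of_left_le (hmono (Set.left_mem_Icc.2 hpk) (Set.right_mem_Icc.2 hpk) hpk)

section Slack

variable {V : Type*} [Fintype V] (r c : V → ℕ) (β : ℕ)

/-- For `#{β < r} ≤ k ≤ #{β ≤ r}`, the largest value of `∑ v ∈ S, r v + #{v ∈ S | k ≤ c v}` over
`k`-sets `S`: take `{β < r}` and fill up from `{r = β}`, preferring vertices with `k ≤ c`. -/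
def greedyBound (k : ℕ) : ℤ :=
  ∑ x with β < r x, r x + #{x | β < r x ∧ k ≤ c x} + ((k : ℤ) - #{x | β < r x}) * β +
    min ((k : ℤ) - #{x | β < r x}) #{x | r x = β ∧ k ≤ c x}

def slack (k : ℕ) : ℤ := ∑ x, min (c x) k - greedyBound r c β k

lemma card_filter_and_le_anti (Q : V → Prop) [DecidablePred Q] {k k' : ℕ} (h : k ≤ k') :
    #{x | Q x ∧ k' ≤ c x} ≤ #{x | Q x ∧ k ≤ c x} :=
  card_le_card (monotone_filter_right _ fun _ _ hx => ⟨hx.1, h.trans hx.2⟩)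

lemma sum_min_succ (k : ℕ) :
    ∑ x, min (c x) (k + 1) = ∑ x, min (c x) k + #{x | β < r x ∧ k + 1 ≤ c x} +
      #{x | r x = β ∧ k + 1 ≤ c x} + #{x | r x < β ∧ k + 1 ≤ c x} := by
  simp only [card_filter, ← sum_add_distrib]
  refine sum_congr rfl fun x _ => ?_
  split_ifs <;> omega

lemma slack_succ_sub_le {m m' : ℕ} (hmm' : m < m') :
    slack r c β (m' + 1) - slack r c β m' ≤ slack r c β (m + 1) - slack r c β m + 1 := by
  have hP := card_filter_and_le_anti c (β < r ·) (k := m) (k' := m') (by omega)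
  have hB₁ := card_filter_and_le_anti c (r · = β) (k := m') (k' := m' + 1) (by omega)
  have hB₂ := card_filter_and_le_anti c (r · = β) (k := m + 1) (k' := m') (by omega)
  have hB₃ := card_filter_and_le_anti c (r · = β) (k := m) (k' := m + 1) (by omega)
  have hT := card_filter_and_le_anti c (r · < β) (k := m + 1) (k' := m' + 1) (by omega)
  have hβ (j : ℕ) : (((j + 1 : ℕ) : ℤ) - #{x | β < r x}) * β = ((j : ℤ) - #{x | β < r x}) * β + β := by
    push_cast; ring
  simp only [slack, greedyBound, sum_min_succ r c β m, sum_min_succ r c β m', hβ]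
  push_cast
  omega

end Slack

section Threshold

variable {V : Type*} [Fintype V] [DecidableEq V] (r c : V → ℕ) (β : ℕ)

lemma sum_min_card_erase_add_card (S : Finset V) :
    ∑ w, min (c w) #(S.erase w) + #{w ∈ S | #S ≤ c w} = ∑ w, min (c w) #S := by
  rw [card_filter, ← Fintype.sum_ite_mem S, ← sum_add_distrib]
  refine sum_congr rfl fun w _ => ?_
  by_cases hw : w ∈ S
  · have := card_pos.mpr ⟨w, hw⟩
    rw [card_erase_of_mem hw, if_pos hw]
    split_ifs <;> omega
  · rw [erase_eq_of_notMem hw, if_neg hw, add_zero]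

lemma sum_add_card_le_greedyBound (S : Finset V) :
    ((∑ v ∈ S, r v + #{v ∈ S | #S ≤ c v} : ℕ) : ℤ) ≤ greedyBound r c β #S := by
  set k := #S
  let g (x : V) : ℤ := r x + (if k ≤ c x then 1 else 0) - β
  have hS : ((∑ v ∈ S, r v + #{v ∈ S | k ≤ c v} : ℕ) : ℤ) = ∑ x ∈ S, g x + k * β := by
    simp only [g, sum_sub_distrib, sum_add_distrib, sum_const, card_filter, nsmul_eq_mul]
    push_cast
    ring
  have hP : (∑ x with β < r x, r x + #{x | β < r x ∧ k ≤ c x} : ℤ) =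
      ∑ x with β < r x, g x + #{x | β < r x} * β := by
    rw [← filter_filter]
    simp only [g, sum_sub_distrib, sum_add_distrib, sum_const, card_filter, nsmul_eq_mul]
    push_cast
    ring
  have hbound := sum_le_sum_add_min (g := g) (S := S) (P := {x | β < r x})
    (Z := {x | r x = β ∧ k ≤ c x})
    (fun x hx => by
      simp only [mem_filter, mem_univ, true_and] at hx
      simp only [g]
      split_ifs <;> omega)
    (fun x hx => by
      simp only [mem_filter, mem_univ, true_and] at hx ⊢
      simp only [g]
      split_ifs <;> omega)
  rw [hS, greedyBound, hP]
  linear_combination hbound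

lemma slack_card_lt_nonneg (hP : FulkersonIneq r c {x | β < r x}) :
    0 ≤ slack r c β #{x | β < r x} := by
  have h := sum_min_card_erase_add_card c {x | β < r x}
  rw [filter_filter] at h
  unfold FulkersonIneq at hP
  simp only [slack, greedyBound, sub_self, zero_mul, add_zero]
  have : min (0 : ℤ) #{x | r x = β ∧ #{x | β < r x} ≤ c x} = 0 := min_eq_left (by positivity)
  omega

lemma slack_card_le_nonneg (hQ : FulkersonIneq r c {x | β ≤ r x}) :
    0 ≤ slack r c β #{x | β ≤ r x} := by
  rw [slack, greedyBound]
  set Q : Finset V := {x | β ≤ r x}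
  set P : Finset V := {x | β < r x}
  set B : Finset V := {x | r x = β}
  have hsplit : Q = P ∪ B := by
    ext x; simp only [Q, P, B, mem_filter, mem_univ, true_and, mem_union]; omega
  have hdisj : Disjoint P B := disjoint_filter.2 fun x _ h₁ h₂ => by omega
  have hcard : #Q = #P + #B := by rw [hsplit, card_union_of_disjoint hdisj]
  have hsum : ∑ x ∈ Q, r x = ∑ x ∈ P, r x + #B * β := by
    rw [hsplit, sum_union hdisj, sum_const_nat (s := B) fun x hx => by simpa [B] using hx]
  have hcount : #{x ∈ Q | #Q ≤ c x} = #{x | β < r x ∧ #Q ≤ c x} + #{x | r x = β ∧ #Q ≤ c x} := by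
    rw [hsplit, filter_union, card_union_of_disjoint (disjoint_filter_filter hdisj), filter_filter,
      filter_filter]
  have hband : #{x | r x = β ∧ #Q ≤ c x} ≤ #B :=
    card_le_card (monotone_filter_right _ fun x _ hx => hx.1)
  have key : ∑ x ∈ P, r x + #{x | β < r x ∧ #Q ≤ c x} + #B * β + #{x | r x = β ∧ #Q ≤ c x} ≤
      ∑ x, min (c x) #Q := by
    have := sum_min_card_erase_add_card c Q
    unfold FulkersonIneq at hQ
    omega
  have hqp : ((#Q : ℕ) : ℤ) - #P = #B := by rw [hcard]; push_cast; ring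
  rw [hqp, min_eq_right (Nat.cast_le.mpr hband)]
  exact sub_nonneg.mpr (by exact_mod_cast key)

theorem fulkersonIneq_of_card_between {S : Finset V}
    (hP : FulkersonIneq r c {x | β < r x}) (hQ : FulkersonIneq r c {x | β ≤ r x})
    (hPS : #{x | β < r x} ≤ #S) (hSQ : #S ≤ #{x | β ≤ r x}) : FulkersonIneq r c S := by
  have hslack : 0 ≤ slack r c β #S :=
    (le_min (slack_card_lt_nonneg r c β hP) (slack_card_le_nonneg r c β hQ)).trans
      (min_le_of_increment_drop_le_one hPS hSQ fun _ _ _ hmm' => slack_succ_sub_le r c β hmm')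
  have hbound := sum_add_card_le_greedyBound r c β S
  have hcount := sum_min_card_erase_add_card c S
  have : ∑ v ∈ S, r v + #{v ∈ S | #S ≤ c v} ≤ ∑ w, min (c w) #S := by
    rw [slack] at hslack
    exact_mod_cast hbound.trans (sub_nonneg.mp hslack)
  unfold FulkersonIneq
  omega

end Threshold

lemma fulkersonIneq_univ {V : Type*} [Fintype V] [DecidableEq V] {r c : V → ℕ}
    (hc : ∀ w, c w ≤ Fintype.card V - 1) (hsum : ∑ v, r v = ∑ w, c w) :
    FulkersonIneq r c univ := by
  unfold FulkersonIneq
  rw [hsum]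
  refine sum_le_sum fun w _ => ?_
  rw [card_erase_of_mem (mem_univ w), card_univ]
  exact (min_eq_left (hc w)).ge

lemma fulkersonIneq_val_lt_iff {n : ℕ} {r c : Fin n → ℕ} {k : ℕ} (hk : k ≤ n) :
    FulkersonIneq r c {x : Fin n | (x : ℕ) < k} ↔
      (∑ i : Fin n, if (i : ℕ) < k then r i else 0) ≤
        ∑ i : Fin n, if (i : ℕ) < k then min (c i) (k - 1) else min (c i) k := by
  have hcard : #{x : Fin n | (x : ℕ) < k} = k := by rw [Fin.card_filter_val_lt]; omega
  have hmin (w : Fin n) : min (c w) #(({x : Fin n | (x : ℕ) < k} : Finset (Fin n)).erase w) =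
      if (w : ℕ) < k then min (c w) (k - 1) else min (c w) k := by
    split_ifs with hw
    · rw [card_erase_of_mem (by simpa using hw), hcard]
    · rw [erase_eq_of_notMem (by simpa using hw), hcard]
  rw [FulkersonIneq, sum_filter]
  simp only [hmin]

lemma antitone_of_forall_val_add_one_eq {α : Type*} [Preorder α] {n : ℕ} {f : Fin n → α}
    (h : ∀ i j : Fin n, (i : ℕ) + 1 = j → f j ≤ f i) : Antitone f := by
  cases n with
  | zero => exact fun i => i.elim0
  | succ n => exact Fin.antitone_iff_succ_le.2 fun i => h _ _ (by simp)

lemma filter_eq_filter_val_lt_card {n : ℕ} (p : Fin n → Prop) [DecidablePred p]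
    (hp : ∀ i j, j ≤ i → p i → p j) :
    ({x | p x} : Finset (Fin n)) = ({x | (x : ℕ) < #{x | p x}} : Finset (Fin n)) := by
  ext x
  simp [Fin.lt_card_filter_univ_iff_apply_of_imp p hp]

lemma fulkersonIneq_of_antitone {n : ℕ} {r c : Fin n → ℕ} (hr : Antitone r)
    (hinit : ∀ k ≤ n, FulkersonIneq r c {x : Fin n | (x : ℕ) < k}) (S : Finset (Fin n)) :
    FulkersonIneq r c S := by
  rcases S.eq_empty_or_nonempty with rfl | hS
  · simp [FulkersonIneq]
  have hk : 0 < #S := hS.card_pos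
  have hkn : #S ≤ n := by simpa using card_le_univ S
  set β := r ⟨#S - 1, by omega⟩
  have hlt : ∀ i j, j ≤ i → β < r i → β < r j := fun i j hji h => h.trans_le (hr hji)
  have hle : ∀ i j, j ≤ i → β ≤ r i → β ≤ r j := fun i j hji h => h.trans (hr hji)
  have hcard (p : Fin n → Prop) [DecidablePred p] : #{x | p x} ≤ n := by
    simpa using card_filter_le univ p
  refine fulkersonIneq_of_card_between r c β ?_ ?_ ?_ ?_
  · rw [filter_eq_filter_val_lt_card _ hlt]; exact hinit _ (hcard _)
  · rw [filter_eq_filter_val_lt_card _ hle]; exact hinit _ (hcard _)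
  · have := (Fin.lt_card_filter_univ_iff_apply_of_imp (j := ⟨#S - 1, by omega⟩) _ hlt).not.mpr
      (lt_irrefl β)
    simp only [not_lt] at this
    omega
  · have := (Fin.lt_card_filter_univ_iff_apply_of_imp (j := ⟨#S - 1, by omega⟩) _ hle).mpr le_rfl
    simp only at this
    omega

end DigraphRealization

/-- Theorem 3: for a sequence that is merely nonincreasing in the
first component, equal degree sums together with the Fulkerson–Chen inequalities
for `1 ≤ k < n` imply that the sequence is digraphical. -/
theorem stmt14 (n : ℕ) (αp αm : Fin n → ℕ)
    (hdec : ∀ i j : Fin n, (i : ℕ) + 1 = (j : ℕ) → αp j ≤ αp i)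
    (hub : ∀ i, αm i ≤ n - 1)
    (hsum : (∑ i, αp i) = ∑ i, αm i)
    (hfc : ∀ k : ℕ, 1 ≤ k → k < n →
      (∑ i : Fin n, if (i : ℕ) < k then αp i else 0) ≤
        ∑ i : Fin n, if (i : ℕ) < k then min (αm i) (k - 1) else min (αm i) k) :
    ∃ A : Fin n → Fin n → ℕ, ZeroOne n A ∧ ZeroDiag n A ∧
      (∀ i, outdeg n A i = αp i) ∧ (∀ j, indeg n A j = αm j) := by
  have hinit : ∀ k ≤ n, DigraphRealization.FulkersonIneq αp αm {x : Fin n | (x : ℕ) < k} := by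
    intro k hk
    rcases Nat.eq_zero_or_pos k with rfl | hk0
    · simp [DigraphRealization.FulkersonIneq]
    rcases hk.lt_or_eq with hkn | rfl
    · exact (DigraphRealization.fulkersonIneq_val_lt_iff hk).2 (hfc k hk0 hkn)
    · simpa using DigraphRealization.fulkersonIneq_univ (by simpa using hub) hsum
  obtain ⟨E, hloopless, hout, hin⟩ := DigraphRealization.exists_realization hsum
    (DigraphRealization.fulkersonIneq_of_antitone
      (DigraphRealization.antitone_of_forall_val_add_one_eq hdec) hinit)
  exact ⟨fun i j => if (i, j) ∈ E then 1 else 0, fun i j => by by_cases h : (i, j) ∈ E <;> simp [h],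
    fun i => if_neg fun h => hloopless _ h rfl, hout, hin⟩
end

section
/- Let A = [a_ij] be an n×n zero-one matrix with zero diagonal and column sums α_j^- = Σ_i a_ij, and suppose that for every triple of distinct indices i, j, k with i < j, a_jk = 1 implies a_ik = 1. Then for every k with 1 ≤ k ≤ n and every column index j: if j ≤ k then Σ_{i=1}^k a_ij = min(α_j^-, k−1), and if j > k then Σ_{i=1}^k a_ij = min(α_j^-, k). -/
/-!
Fix the column `j` and let `T` be the first `k` rows. The ones of column `j` inside `T` never
exceed `#(T.erase j)` (the diagonal entry vanishes) nor the in-degree. If they fall short of the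
in-degree, some row `w` outside `T`, hence below all of `T`, has a one in column `j`, and
nestedness pushes that one up to every row of `T` other than `j`, so the first bound is attained.
-/

open Finset

section Column

variable {ι : Type*} [Fintype ι] [LinearOrder ι] [DecidableEq ι]

theorem sum_lowerSet_eq_min_card_erase {c : ι → ℕ} {j : ι} {T : Finset ι}
    (h01 : ∀ i, c i ≤ 1) (hj : c j = 0)
    (hnest : ∀ i w, i ≠ j → w ≠ j → i < w → c w = 1 → c i = 1)
    (hT : IsLowerSet (T : Set ι)) :
    ∑ i ∈ T, c i = min (∑ i, c i) #(T.erase j) := by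
  rw [← sum_erase T hj]
  have hle_card : ∑ i ∈ T.erase j, c i ≤ #(T.erase j) := by
    simpa using sum_le_card_nsmul _ _ 1 fun i _ => h01 i
  have hle_total : ∑ i ∈ T.erase j, c i ≤ ∑ i, c i :=
    sum_le_sum_of_subset (subset_univ _)
  rcases hle_total.lt_or_eq with hlt | heq
  · obtain ⟨w, hwT, hw⟩ : ∃ w ∉ T, c w ≠ 0 := by
      by_contra! hzero
      rw [sum_erase T hj, sum_subset (subset_univ T) fun w _ hwT => hzero w hwT] at hlt
      exact hlt.false
    have hw1 : c w = 1 := by have := h01 w; omega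
    have hwj : w ≠ j := by rintro rfl; omega
    have hfull : ∑ i ∈ T.erase j, c i = #(T.erase j) := by
      rw [card_eq_sum_ones]
      refine sum_congr rfl fun i hi => ?_
      obtain ⟨hij, hiT⟩ := mem_erase.mp hi
      exact hnest i w hij hwj (lt_of_not_ge fun hwi => hwT (hT hwi hiT)) hw1
    omega
  · omega

end Column

theorem isLowerSet_filter_val_lt (n k : ℕ) :
    IsLowerSet ((univ.filter fun i : Fin n => (i : ℕ) < k : Finset (Fin n)) : Set (Fin n)) := by
  intro a b hba ha
  simp only [coe_filter, mem_univ, true_and, Set.mem_ofPred_eq] at ha ⊢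
  exact lt_of_le_of_lt (Fin.le_def.mp hba) ha

/-- under the nesting condition, the number of ones in the first `k`
rows of column `j` is `min(α_j⁻, k - 1)` if `j ≤ k` (1-based; `j < k` 0-based) and
`min(α_j⁻, k)` otherwise. -/
theorem stmt17 (n : ℕ) (A : Fin n → Fin n → ℕ)
    (h01 : ZeroOne n A) (hdiag : ZeroDiag n A)
    (hnest : Nested n A) :
    ∀ k : ℕ, 1 ≤ k → k ≤ n → ∀ j : Fin n,
      ((j : ℕ) < k →
        (∑ i : Fin n, if (i : ℕ) < k then A i j else 0) = min (indeg n A j) (k - 1)) ∧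
      (k ≤ (j : ℕ) →
        (∑ i : Fin n, if (i : ℕ) < k then A i j else 0) = min (indeg n A j) k) := by
  intro k _ hkn j
  have hcol := sum_lowerSet_eq_min_card_erase (c := fun i => A i j) (j := j)
    (fun i => (h01 i j).elim (fun h => h ▸ zero_le_one) le_of_eq) (hdiag j)
    (fun i w hij hwj hiw hw => hnest i w j hiw.ne hij hwj hiw hw)
    (isLowerSet_filter_val_lt n k)
  have hcard : #(univ.filter fun i : Fin n => (i : ℕ) < k) = k := by
    rw [Fin.card_filter_val_lt, min_eq_right hkn]
  rw [← sum_filter, hcol]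
  refine ⟨fun hjk => ?_, fun hkj => ?_⟩
  · rw [card_erase_of_mem (by simpa using hjk), hcard]; rfl
  · rw [erase_eq_of_notMem (by simpa using hkj), hcard]; rfl
end
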